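/- arXiv:2411.12189 — 5 statements merged into one kernel-verified Lean document; each statement's English description precedes it below -/
import Mathlib

section
/- Let q = (q₁, q₂, …) be a probability distribution on {1,2,…} with first moment m₁ = Σ k q_k finite, and for a probability measure μ on ℝ≥0 define μ^q = Σ_{k≥1} q_k μ^{*k} (the q-mixture of convolution powers). Then for any two probability measures μ, ν on ℝ≥0, the Wasserstein distance (with respect to the truncated metric min(1,|x-y|)) satisfies W(μ^q, ν^q) ≤ m₁ · W(μ, ν). -/
open MeasureTheory ProbabilityTheory Filter
open scoped ENNReal NNReal

noncomputable section

/-- Truncated Euclidean cost `ρ(x,y) = min(1, |x-y|)` on `ℝ≥0`. -/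
def rho (x y : ℝ≥0) : ℝ := min 1 |(x : ℝ) - (y : ℝ)|

/-- `π` is a coupling of `μ` and `ν`. -/
def IsCoupling (π : Measure (ℝ≥0 × ℝ≥0)) (μ ν : Measure ℝ≥0) : Prop :=
  π.map Prod.fst = μ ∧ π.map Prod.snd = ν

/-- Wasserstein distance for the truncated cost. -/
def W (μ ν : Measure ℝ≥0) : ℝ :=
  sInf { r : ℝ | ∃ π : Measure (ℝ≥0 × ℝ≥0),
    IsProbabilityMeasure π ∧ IsCoupling π μ ν ∧ r = ∫ p, rho p.1 p.2 ∂π }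

/-- Convolution of two measures on `ℝ≥0`. -/
def conv (μ ν : Measure ℝ≥0) : Measure ℝ≥0 :=
  (μ.prod ν).map (fun p => p.1 + p.2)

/-- `k`-fold convolution power (`convPow μ 0 = δ₀`). -/
def convPow (μ : Measure ℝ≥0) : ℕ → Measure ℝ≥0
  | 0 => Measure.dirac 0
  | n + 1 => conv (convPow μ n) μ

/-- The `q`-mixture `μ^q = ∑_{k≥1} q_k μ^{*k}` (`q k` = weight of `k`). -/
def qMix (q : ℕ → ℝ≥0) (μ : Measure ℝ≥0) : Measure ℝ≥0 :=
  Measure.sum (fun k => ((q (k + 1) : ℝ≥0∞)) • convPow μ (k + 1))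

/-- Total variation norm of the difference of two finite measures. -/
def tvDist (μ ν : Measure ℝ≥0) : ℝ :=
  sSup { r : ℝ | ∃ s : Set ℝ≥0, MeasurableSet s ∧
    r = |(μ s).toReal - (ν s).toReal| + |(μ sᶜ).toReal - (ν sᶜ).toReal| }

/-! Given a coupling `π` of `μ` and `ν`, its `k`-fold convolution power on `ℝ≥0 × ℝ≥0` couples
`μ^{*k}` and `ν^{*k}`, and since `ρ(a + x, b + y) ≤ ρ(a, b) + ρ(x, y)` its cost is at most `k`
times that of `π`. Mixing these powers with the weights `q_k` gives a coupling of `μ^q` and `ν^q`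
of cost at most `m₁ ∫ ρ dπ`. -/

lemma rho_nonneg (x y : ℝ≥0) : 0 ≤ rho x y := le_min zero_le_one (abs_nonneg _)

lemma abs_rho_le_one (x y : ℝ≥0) : |rho x y| ≤ 1 := by
  rw [abs_of_nonneg (rho_nonneg x y)]
  exact min_le_left _ _

lemma rho_self (x : ℝ≥0) : rho x x = 0 := by simp [rho]

lemma rho_add_le (a b x y : ℝ≥0) : rho (a + x) (b + y) ≤ rho a b + rho x y := by
  have hsub : |((a + x : ℝ≥0) : ℝ) - (b + y : ℝ≥0)| ≤ |(a : ℝ) - b| + |(x : ℝ) - y| := by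
    push_cast
    exact (abs_add_le _ _).trans_eq' (by ring_nf)
  have := abs_nonneg ((a : ℝ) - b)
  have := abs_nonneg ((x : ℝ) - y)
  simp only [rho, min_def]
  split_ifs <;> linarith

lemma measurable_rho : Measurable (fun p : ℝ≥0 × ℝ≥0 => rho p.1 p.2) := by
  unfold rho
  fun_prop

section iterConv

variable {M : Type*} [AddMonoid M] [MeasurableSpace M] [MeasurableAdd₂ M]

def iterConv (μ : Measure M) : ℕ → Measure M
  | 0 => Measure.dirac 0
  | n + 1 => iterConv μ n ∗ μ

instance (μ : Measure M) [SFinite μ] (n : ℕ) : SFinite (iterConv μ n) := by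
  induction n with
  | zero => exact inferInstanceAs (SFinite (Measure.dirac (0 : M)))
  | succ n ih => exact inferInstanceAs (SFinite (iterConv μ n ∗ μ))

instance (μ : Measure M) [IsProbabilityMeasure μ] (n : ℕ) :
    IsProbabilityMeasure (iterConv μ n) := by
  induction n with
  | zero => exact Measure.dirac.isProbabilityMeasure
  | succ n ih => exact inferInstanceAs (IsProbabilityMeasure (iterConv μ n ∗ μ))

lemma iterConv_eq_convPow (μ : Measure ℝ≥0) (n : ℕ) : iterConv μ n = convPow μ n := by
  induction n with
  | zero => rfl
  | succ n ih => rw [iterConv, convPow, ih]; rfl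

lemma map_iterConv {M' : Type*} [AddMonoid M'] [MeasurableSpace M'] [MeasurableAdd₂ M']
    (μ : Measure M) [SFinite μ] (L : M →+ M') (hL : Measurable L) (n : ℕ) :
    (iterConv μ n).map L = iterConv (μ.map L) n := by
  induction n with
  | zero => simp [iterConv, Measure.map_dirac' hL]
  | succ n ih => rw [iterConv, Measure.map_conv_addMonoidHom L hL, ih, iterConv]

lemma integral_conv_le_of_subadditive (μ ν : Measure M) [IsProbabilityMeasure μ]
    [IsProbabilityMeasure ν] {f : M → ℝ} (hf : Measurable f) (C : ℝ) (hC : ∀ x, |f x| ≤ C)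
    (hadd : ∀ x y, f (x + y) ≤ f x + f y) :
    ∫ x, f x ∂(μ ∗ ν) ≤ ∫ x, f x ∂μ + ∫ x, f x ∂ν := by
  have hint : ∀ (ρ : Measure M) [IsFiniteMeasure ρ], Integrable f ρ := fun ρ _ =>
    .of_bound hf.aestronglyMeasurable C (.of_forall hC)
  have hint₁ : Integrable (fun p : M × M => f p.1) (μ.prod ν) :=
    (hint _).comp_measurable measurable_fst
  have hint₂ : Integrable (fun p : M × M => f p.2) (μ.prod ν) :=
    (hint _).comp_measurable measurable_snd
  calc ∫ x, f x ∂(μ ∗ ν) = ∫ p : M × M, f (p.1 + p.2) ∂(μ.prod ν) :=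
        integral_map (by fun_prop) hf.aestronglyMeasurable
    _ ≤ ∫ p : M × M, (f p.1 + f p.2) ∂(μ.prod ν) :=
        integral_mono ((hint _).comp_measurable (by fun_prop)) (hint₁.add hint₂)
          fun p => hadd p.1 p.2
    _ = ∫ x, f x ∂μ + ∫ x, f x ∂ν := by
        simp [integral_add hint₁ hint₂, integral_fun_fst, integral_fun_snd]

lemma integral_iterConv_le_of_subadditive (μ : Measure M) [IsProbabilityMeasure μ]
    {f : M → ℝ} (hf : Measurable f) (C : ℝ) (hC : ∀ x, |f x| ≤ C) (hf0 : f 0 = 0)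
    (hadd : ∀ x y, f (x + y) ≤ f x + f y) (n : ℕ) :
    ∫ x, f x ∂(iterConv μ n) ≤ n * ∫ x, f x ∂μ := by
  induction n with
  | zero => simp [iterConv, integral_dirac' f 0 hf.stronglyMeasurable, hf0]
  | succ n ih =>
    calc ∫ x, f x ∂(iterConv μ (n + 1))
        ≤ ∫ x, f x ∂(iterConv μ n) + ∫ x, f x ∂μ :=
          integral_conv_le_of_subadditive _ _ hf C hC hadd
      _ ≤ (n + 1 : ℕ) * ∫ x, f x ∂μ := by push_cast; linarith

def convMix (q : ℕ → ℝ≥0) (μ : Measure M) : Measure M :=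
  Measure.sum fun k => (q (k + 1) : ℝ≥0∞) • iterConv μ (k + 1)

lemma convMix_eq_qMix (q : ℕ → ℝ≥0) (μ : Measure ℝ≥0) : convMix q μ = qMix q μ := by
  simp only [convMix, qMix, iterConv_eq_convPow]

lemma map_convMix {M' : Type*} [AddMonoid M'] [MeasurableSpace M'] [MeasurableAdd₂ M']
    (q : ℕ → ℝ≥0) (μ : Measure M) [SFinite μ] (L : M →+ M') (hL : Measurable L) :
    (convMix q μ).map L = convMix q (μ.map L) := by
  simp only [convMix, Measure.map_sum hL.aemeasurable, Measure.map_smul, map_iterConv μ L hL]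

lemma isProbabilityMeasure_convMix {q : ℕ → ℝ≥0} (hq : HasSum (fun k => q (k + 1)) 1)
    (μ : Measure M) [IsProbabilityMeasure μ] : IsProbabilityMeasure (convMix q μ) := by
  constructor
  simp [convMix, ← ENNReal.coe_tsum hq.summable, hq.tsum_eq]

lemma integral_convMix_le_of_subadditive {q : ℕ → ℝ≥0} (hq : HasSum (fun k => q (k + 1)) 1)
    {m : ℝ} (hm : HasSum (fun k : ℕ => (k : ℝ) * q k) m) (μ : Measure M) [IsProbabilityMeasure μ]
    {f : M → ℝ} (hf : Measurable f) (C : ℝ) (hC : ∀ x, |f x| ≤ C) (hf0 : f 0 = 0)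
    (hadd : ∀ x y, f (x + y) ≤ f x + f y) :
    ∫ x, f x ∂(convMix q μ) ≤ m * ∫ x, f x ∂μ := by
  have := isProbabilityMeasure_convMix hq μ
  have hint : Integrable f (convMix q μ) := .of_bound hf.aestronglyMeasurable C (.of_forall hC)
  have hmix := hasSum_integral_measure hint
  have hm' : HasSum (fun k : ℕ => ((k + 1 : ℕ) : ℝ) * q (k + 1)) m := by
    simpa using (hasSum_nat_add_iff' 1).2 hm
  refine hasSum_le (fun k => ?_) hmix (hm'.mul_right (∫ x, f x ∂μ))
  rw [integral_smul_measure, ENNReal.coe_toReal, smul_eq_mul, mul_comm ((k + 1 : ℕ) : ℝ),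
    mul_assoc]
  exact mul_le_mul_of_nonneg_left
    (integral_iterConv_le_of_subadditive μ hf C hC hf0 hadd (k + 1)) (q (k + 1)).coe_nonneg

end iterConv

lemma IsCoupling.convMix {π : Measure (ℝ≥0 × ℝ≥0)} [IsProbabilityMeasure π] {μ ν : Measure ℝ≥0}
    (h : IsCoupling π μ ν) (q : ℕ → ℝ≥0) : IsCoupling (convMix q π) (qMix q μ) (qMix q ν) :=
  ⟨by rw [← h.1, ← convMix_eq_qMix]; exact map_convMix q π (AddMonoidHom.fst _ _) measurable_fst,
   by rw [← h.2, ← convMix_eq_qMix]; exact map_convMix q π (AddMonoidHom.snd _ _) measurable_snd⟩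

lemma isCoupling_prod (μ ν : Measure ℝ≥0) [IsProbabilityMeasure μ] [IsProbabilityMeasure ν] :
    IsCoupling (μ.prod ν) μ ν :=
  ⟨by simp [Measure.map_fst_prod], by simp [Measure.map_snd_prod]⟩

lemma W_le_integral {π : Measure (ℝ≥0 × ℝ≥0)} [IsProbabilityMeasure π] {μ ν : Measure ℝ≥0}
    (h : IsCoupling π μ ν) : W μ ν ≤ ∫ p, rho p.1 p.2 ∂π :=
  csInf_le ⟨0, by rintro _ ⟨π', -, -, rfl⟩; exact integral_nonneg fun p => rho_nonneg _ _⟩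
    ⟨π, ‹_›, h, rfl⟩

lemma le_mul_W_of_forall_coupling {a c : ℝ} (hc : 0 ≤ c) (μ ν : Measure ℝ≥0)
    [IsProbabilityMeasure μ] [IsProbabilityMeasure ν]
    (h : ∀ π, IsProbabilityMeasure π → IsCoupling π μ ν → a ≤ c * ∫ p, rho p.1 p.2 ∂π) :
    a ≤ c * W μ ν := by
  rw [W, ← smul_eq_mul, ← Real.sInf_smul_of_nonneg hc]
  refine le_csInf (Set.Nonempty.image _ ⟨_, μ.prod ν, inferInstance, isCoupling_prod μ ν, rfl⟩) ?_
  rintro _ ⟨_, ⟨π, hπ, hcoup, rfl⟩, rfl⟩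
  exact h π hπ hcoup

/-- `W(μ^q, ν^q) ≤ m₁ W(μ,ν)` for an offspring distribution `q` with first moment `m₁`. -/
theorem wasserstein_qMix_le (q : ℕ → ℝ≥0) (hq0 : q 0 = 0) (hq1 : ∑' k, q k = 1)
    (m₁ : ℝ) (hm₁ : HasSum (fun k : ℕ => (k : ℝ) * (q k : ℝ)) m₁)
    (μ ν : Measure ℝ≥0) [IsProbabilityMeasure μ] [IsProbabilityMeasure ν] :
    W (qMix q μ) (qMix q ν) ≤ m₁ * W μ ν := by
  have hq : HasSum (fun k => q (k + 1)) 1 := by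
    have hsum : Summable q := by
      by_contra h
      rw [tsum_eq_zero_of_not_summable h] at hq1
      exact zero_ne_one hq1
    rw [NNReal.hasSum_nat_add_iff 1]
    simpa [hq0, hq1] using hsum.hasSum
  refine le_mul_W_of_forall_coupling (hm₁.nonneg fun k => by positivity) μ ν
    fun π _ hcoup => ?_
  have := isProbabilityMeasure_convMix hq π
  calc W (qMix q μ) (qMix q ν) ≤ ∫ p, rho p.1 p.2 ∂(convMix q π) :=
        W_le_integral (hcoup.convMix q)
    _ ≤ m₁ * ∫ p, rho p.1 p.2 ∂π :=
        integral_convMix_le_of_subadditive hq hm₁ π measurable_rho 1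
          (fun p => abs_rho_le_one p.1 p.2) (rho_self 0) (fun p p' => rho_add_le _ _ _ _)
end
end

section
/- Let a ≥ 0 and let q be an offspring distribution on {1,2,…} with finite first moment m₁. Define the Picard iterates: μ_t^{(0)} = e^{−at} μ₀ ∘ T_t^{−1}, and ⟨μ_t^{(n)}, f⟩ = e^{−at}⟨μ₀, T_t f⟩ + a∫₀ᵗ e^{a(s−t)}⟨μ_s^{(n−1)} * (μ_s^{(n−1)})^q, T_{t−s}f⟩ ds. Then for all m > n ≥ 1 and t ≥ 0, ‖μ_t^{(n)} − μ_t^{(m)}‖_TV ≤ 2 Σ_{k=n}^∞ aᵏ(m₁+1)ᵏ tᵏ / k!, so the iterates form a Cauchy sequence in total variation, uniformly on compact time intervals. -/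
open MeasureTheory ProbabilityTheory Filter
open scoped ENNReal NNReal

noncomputable section

/-!
All iterates are sub-probability measures, and for such measures
`‖μ₁ * ν₁ - μ₂ * ν₂‖ ≤ ‖μ₁ - μ₂‖ + ‖ν₁ - ν₂‖` and `‖μ^q - ν^q‖ ≤ m₁ ‖μ - ν‖`. Hence one Picard step
moves the integrand of the mild equation at time `s` by at most
`(m₁ + 1) ‖μ_s^{(n)} - μ_s^{(n-1)}‖`, while `e^{a(s-t)} ≤ 1`. Starting from the trivial bound
`‖μ_t^{(0)} - μ_t^{(1)}‖ ≤ 2`, induction gives `‖μ_t^{(n)} - μ_t^{(n+1)}‖ ≤ 2 (a (m₁ + 1) t)^n / n!`,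
and the triangle inequality bounds `‖μ_t^{(n)} - μ_t^{(m)}‖` by a tail of the exponential series.

Total variation is used through its dual form: it is the supremum of `∫ f dμ - ∫ f dν` over
measurable `|f| ≤ 1`, one inequality coming from a Hahn decomposition.
-/

open Set

section BoundedIntegrands

variable {α : Type*} [MeasurableSpace α]

lemma integrable_of_abs_le_one {μ : Measure α} [IsFiniteMeasure μ] {f : α → ℝ}
    (hf : Measurable f) (hb : ∀ x, |f x| ≤ 1) : Integrable f μ :=
  .of_bound hf.aestronglyMeasurable 1 (ae_of_all μ fun x => (Real.norm_eq_abs _).trans_le (hb x))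

lemma abs_integral_le_one {μ : Measure α} (hμ : μ univ ≤ 1) {f : α → ℝ} (hf : ∀ x, |f x| ≤ 1) :
    |∫ x, f x ∂μ| ≤ 1 := by
  have : IsFiniteMeasure μ := ⟨hμ.trans_lt ENNReal.one_lt_top⟩
  have hμ' : μ.real univ ≤ 1 := ENNReal.toReal_le_of_le_ofReal zero_le_one (by simpa using hμ)
  simpa using (norm_integral_le_of_norm_le_const (C := 1)
    (ae_of_all μ fun x => (Real.norm_eq_abs _).trans_le (hf x))).trans (by simpa using hμ')

lemma abs_integral_sub_integral_le_of_le {μ ν : Measure α} [IsFiniteMeasure μ] (hνμ : ν ≤ μ)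
    {f : α → ℝ} (hf : Measurable f) (hb : ∀ x, |f x| ≤ 1) :
    |∫ x, f x ∂μ - ∫ x, f x ∂ν| ≤ μ.real univ - ν.real univ := by
  have : IsFiniteMeasure ν := isFiniteMeasure_of_le μ hνμ
  have hsplit : ∫ x, f x ∂μ = ∫ x, f x ∂(μ - ν) + ∫ x, f x ∂ν := by
    conv_lhs => rw [← Measure.sub_add_cancel_of_le hνμ]
    exact integral_add_measure (integrable_of_abs_le_one hf hb) (integrable_of_abs_le_one hf hb)
  have hmass : (μ - ν).real univ = μ.real univ - ν.real univ := by
    rw [measureReal_def, Measure.sub_apply .univ hνμ,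
      ENNReal.toReal_sub_of_le (hνμ univ) (measure_ne_top _ _), measureReal_def, measureReal_def]
  rw [hsplit, add_sub_cancel_right, ← hmass]
  simpa using norm_integral_le_of_norm_le_const (μ := μ - ν) (C := 1)
    (ae_of_all _ fun x => (Real.norm_eq_abs _).trans_le (hb x))

end BoundedIntegrands

section TotalVariation

variable {μ ν ρ : Measure ℝ≥0}

lemma tvDist_le_of_forall {B : ℝ}
    (h : ∀ s, MeasurableSet s → |μ.real s - ν.real s| + |μ.real sᶜ - ν.real sᶜ| ≤ B) :
    tvDist μ ν ≤ B :=
  csSup_le ⟨_, univ, .univ, rfl⟩ fun _ ⟨s, hs, hr⟩ => hr ▸ h s hs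

variable [IsFiniteMeasure μ] [IsFiniteMeasure ν] [IsFiniteMeasure ρ]

lemma abs_sub_add_abs_sub_le_measureReal_univ_add {s : Set ℝ≥0} (hs : MeasurableSet s) :
    |μ.real s - ν.real s| + |μ.real sᶜ - ν.real sᶜ| ≤ μ.real univ + ν.real univ := by
  have h : ∀ x y : ℝ, 0 ≤ x → 0 ≤ y → |x - y| ≤ x + y := fun x y hx hy =>
    abs_sub_le_iff.2 ⟨by linarith, by linarith⟩
  rw [← measureReal_add_measureReal_compl (μ := μ) hs,
    ← measureReal_add_measureReal_compl (μ := ν) hs]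
  linarith [h _ _ (measureReal_nonneg (μ := μ) (s := s)) (measureReal_nonneg (μ := ν) (s := s)),
    h _ _ (measureReal_nonneg (μ := μ) (s := sᶜ)) (measureReal_nonneg (μ := ν) (s := sᶜ))]

lemma le_tvDist {s : Set ℝ≥0} (hs : MeasurableSet s) :
    |μ.real s - ν.real s| + |μ.real sᶜ - ν.real sᶜ| ≤ tvDist μ ν := by
  refine le_csSup ⟨μ.real univ + ν.real univ, ?_⟩ ⟨s, hs, rfl⟩
  rintro _ ⟨t, ht, rfl⟩
  exact abs_sub_add_abs_sub_le_measureReal_univ_add ht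

lemma tvDist_nonneg : 0 ≤ tvDist μ ν :=
  (add_nonneg (abs_nonneg _) (abs_nonneg _)).trans (le_tvDist (μ := μ) (ν := ν) .univ)

lemma tvDist_le_measureReal_univ_add : tvDist μ ν ≤ μ.real univ + ν.real univ :=
  tvDist_le_of_forall fun _ hs => abs_sub_add_abs_sub_le_measureReal_univ_add hs

lemma integral_sub_integral_le_tvDist {f : ℝ≥0 → ℝ} (hf : Measurable f) (hb : ∀ x, |f x| ≤ 1) :
    ∫ x, f x ∂μ - ∫ x, f x ∂ν ≤ tvDist μ ν := by
  obtain ⟨s, hs, hνμ, hμν⟩ := hahn_decomposition μ ν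
  have hle : ν.restrict s ≤ μ.restrict s := Measure.le_iff.2 fun A hA => by
    simpa only [Measure.restrict_apply hA] using hνμ _ (hA.inter hs) inter_subset_right
  have hle' : μ.restrict sᶜ ≤ ν.restrict sᶜ := Measure.le_iff.2 fun A hA => by
    simpa only [Measure.restrict_apply hA] using hμν _ (hA.inter hs.compl) inter_subset_right
  have h₁ := (le_abs_self _).trans (abs_integral_sub_integral_le_of_le hle hf hb)
  have h₂ := (neg_le_abs _).trans (abs_integral_sub_integral_le_of_le hle' hf hb)
  rw [measureReal_restrict_apply_univ, measureReal_restrict_apply_univ] at h₁ h₂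
  rw [← integral_add_compl hs (integrable_of_abs_le_one (μ := μ) hf hb),
    ← integral_add_compl hs (integrable_of_abs_le_one (μ := ν) hf hb)]
  linarith [le_tvDist (μ := μ) (ν := ν) hs, le_abs_self (μ.real s - ν.real s),
    neg_le_abs (μ.real sᶜ - ν.real sᶜ)]

lemma tvDist_le_of_integral_sub_le {B : ℝ}
    (h : ∀ f : ℝ≥0 → ℝ, Measurable f → (∀ x, |f x| ≤ 1) → ∫ x, f x ∂μ - ∫ x, f x ∂ν ≤ B) :
    tvDist μ ν ≤ B := by
  classical
  refine tvDist_le_of_forall fun s hs => ?_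
  set c₁ : ℝ := ((SignType.sign (μ.real s - ν.real s) : SignType) : ℝ)
  set c₂ : ℝ := ((SignType.sign (μ.real sᶜ - ν.real sᶜ) : SignType) : ℝ)
  have hint : ∀ ρ : Measure ℝ≥0, IsFiniteMeasure ρ →
      ∫ x, s.piecewise (fun _ => c₁) (fun _ => c₂) x ∂ρ = ρ.real s * c₁ + ρ.real sᶜ * c₂ := by
    intro ρ _
    rw [integral_piecewise hs (integrableOn_const) (integrableOn_const)]
    simp
  have hc : ∀ y : ℝ, |((SignType.sign y : SignType) : ℝ)| ≤ 1 := fun y => by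
    rcases lt_trichotomy y 0 with h | h | h <;> simp [h]
  have := h (s.piecewise (fun _ => c₁) (fun _ => c₂))
    (measurable_const.piecewise hs measurable_const) fun x => by
      by_cases hx : x ∈ s <;> simp only [piecewise_eq_of_mem, piecewise_eq_of_notMem, hx,
        not_false_eq_true] <;> exact hc _
  rw [hint μ inferInstance, hint ν inferInstance] at this
  rw [← sign_mul_self, ← sign_mul_self]
  linarith

lemma tvDist_triangle : tvDist μ ρ ≤ tvDist μ ν + tvDist ν ρ :=
  tvDist_le_of_integral_sub_le fun _ hf hb => by
    linarith [integral_sub_integral_le_tvDist (μ := μ) (ν := ν) hf hb,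
      integral_sub_integral_le_tvDist (μ := ν) (ν := ρ) hf hb]

lemma tvDist_le_sum_range (μ : ℕ → Measure ℝ≥0) [∀ n, IsFiniteMeasure (μ n)] (n p : ℕ) :
    tvDist (μ n) (μ (n + p)) ≤ ∑ k ∈ Finset.range p, tvDist (μ (n + k)) (μ (n + k + 1)) := by
  induction p with
  | zero => exact tvDist_le_of_forall fun _ _ => by simp
  | succ p ih =>
    rw [Finset.sum_range_succ, ← add_assoc]
    exact tvDist_triangle.trans (add_le_add_left ih _)

end TotalVariation

section Convolution

variable {μ ν μ₁ μ₂ ν₁ ν₂ : Measure ℝ≥0}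

instance [IsFiniteMeasure μ] [IsFiniteMeasure ν] : IsFiniteMeasure (conv μ ν) := by
  unfold conv; infer_instance

lemma conv_apply_univ [SFinite μ] [SFinite ν] : conv μ ν univ = μ univ * ν univ := by
  rw [conv, Measure.map_apply measurable_add .univ, preimage_univ, ← univ_prod_univ,
    Measure.prod_prod]

lemma integral_conv [IsFiniteMeasure μ] [IsFiniteMeasure ν] {g : ℝ≥0 → ℝ} (hg : Measurable g)
    (hb : ∀ x, |g x| ≤ 1) : ∫ x, g x ∂(conv μ ν) = ∫ x, ∫ y, g (x + y) ∂ν ∂μ := by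
  rw [conv, integral_map measurable_add.aemeasurable hg.aestronglyMeasurable]
  exact integral_prod _ (integrable_of_abs_le_one (hg.comp measurable_add) fun p => hb _)

lemma tvDist_conv_le [IsFiniteMeasure μ₁] [IsFiniteMeasure μ₂] [IsFiniteMeasure ν₁]
    [IsFiniteMeasure ν₂] (hμ₂ : μ₂ univ ≤ 1) (hν₁ : ν₁ univ ≤ 1) :
    tvDist (conv μ₁ ν₁) (conv μ₂ ν₂) ≤ tvDist μ₁ μ₂ + tvDist ν₁ ν₂ := by
  refine tvDist_le_of_integral_sub_le fun g hg hb => ?_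
  have hg₂ : Measurable fun p : ℝ≥0 × ℝ≥0 => g (p.1 + p.2) := hg.comp measurable_add
  -- `μ₁ * ν₁ - μ₂ * ν₂ = (μ₁ - μ₂) * ν₁ + μ₂ * (ν₁ - ν₂)`, the mixed term being moved by Fubini.
  have h₁ := integral_sub_integral_le_tvDist (μ := μ₁) (ν := μ₂)
    (hg₂.stronglyMeasurable.integral_prod_right' (ν := ν₁)).measurable
    fun x => abs_integral_le_one hν₁ fun y => hb _
  have h₂ := integral_sub_integral_le_tvDist (μ := ν₁) (ν := ν₂)
    (hg₂.stronglyMeasurable.integral_prod_left' (μ := μ₂)).measurable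
    fun y => abs_integral_le_one hμ₂ fun x => hb _
  have hswap : ∫ x, ∫ y, g (x + y) ∂ν₁ ∂μ₂ = ∫ y, ∫ x, g (x + y) ∂μ₂ ∂ν₁ :=
    integral_integral_swap (integrable_of_abs_le_one hg₂ fun p => hb _)
  have hswap' : ∫ x, ∫ y, g (x + y) ∂ν₂ ∂μ₂ = ∫ y, ∫ x, g (x + y) ∂μ₂ ∂ν₂ :=
    integral_integral_swap (integrable_of_abs_le_one hg₂ fun p => hb _)
  rw [integral_conv hg hb, integral_conv hg hb]
  linarith

instance [IsFiniteMeasure μ] (n : ℕ) : IsFiniteMeasure (convPow μ n) := by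
  induction n with
  | zero => unfold convPow; infer_instance
  | succ n ih => unfold convPow; infer_instance

lemma convPow_apply_univ_le_one [IsFiniteMeasure μ] (hμ : μ univ ≤ 1) (n : ℕ) :
    convPow μ n univ ≤ 1 := by
  induction n with
  | zero => simp [convPow]
  | succ n ih => rw [convPow, conv_apply_univ]; exact mul_le_one' ih hμ

lemma tvDist_convPow_le [IsFiniteMeasure μ] [IsFiniteMeasure ν] (hμ : μ univ ≤ 1)
    (hν : ν univ ≤ 1) (n : ℕ) : tvDist (convPow μ n) (convPow ν n) ≤ n * tvDist μ ν := by
  induction n with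
  | zero => exact tvDist_le_of_forall fun _ _ => by simp [convPow]
  | succ n ih =>
    calc tvDist (convPow μ (n + 1)) (convPow ν (n + 1))
        ≤ tvDist (convPow μ n) (convPow ν n) + tvDist μ ν :=
          tvDist_conv_le (convPow_apply_univ_le_one hν n) hμ
      _ ≤ n * tvDist μ ν + tvDist μ ν := by gcongr
      _ = (n + 1 : ℕ) * tvDist μ ν := by push_cast; ring

variable {q : ℕ → ℝ≥0}

lemma qMix_apply_univ_le_one [IsFiniteMeasure μ] (hq : ∑' k, (q k : ℝ≥0∞) ≤ 1)
    (hμ : μ univ ≤ 1) : qMix q μ univ ≤ 1 := by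
  rw [qMix, Measure.sum_apply _ .univ]
  calc ∑' k, ((q (k + 1) : ℝ≥0∞) • convPow μ (k + 1)) univ
      ≤ ∑' k, (q (k + 1) : ℝ≥0∞) := ENNReal.tsum_le_tsum fun k =>
        mul_le_of_le_one_right' (convPow_apply_univ_le_one hμ _)
    _ ≤ ∑' k, (q k : ℝ≥0∞) := ENNReal.tsum_comp_le_tsum_of_injective (add_left_injective 1) _
    _ ≤ 1 := hq

lemma isFiniteMeasure_qMix [IsFiniteMeasure μ] (hq : ∑' k, (q k : ℝ≥0∞) ≤ 1)
    (hμ : μ univ ≤ 1) : IsFiniteMeasure (qMix q μ) :=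
  ⟨(qMix_apply_univ_le_one hq hμ).trans_lt ENNReal.one_lt_top⟩

lemma hasSum_integral_qMix [IsFiniteMeasure μ] (hq : ∑' k, (q k : ℝ≥0∞) ≤ 1)
    (hμ : μ univ ≤ 1) {g : ℝ≥0 → ℝ} (hg : Measurable g) (hb : ∀ x, |g x| ≤ 1) :
    HasSum (fun k => (q (k + 1) : ℝ) * ∫ x, g x ∂(convPow μ (k + 1))) (∫ x, g x ∂(qMix q μ)) := by
  have := isFiniteMeasure_qMix hq hμ
  simpa [qMix, integral_smul_measure, NNReal.smul_def] using
    hasSum_integral_measure (integrable_of_abs_le_one (μ := qMix q μ) hg hb)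

lemma tvDist_qMix_le {m₁ : ℝ} [IsFiniteMeasure μ] [IsFiniteMeasure ν]
    (hq : ∑' k, (q k : ℝ≥0∞) ≤ 1) (hm₁ : HasSum (fun k : ℕ => (k : ℝ) * q k) m₁)
    (hμ : μ univ ≤ 1) (hν : ν univ ≤ 1) : tvDist (qMix q μ) (qMix q ν) ≤ m₁ * tvDist μ ν := by
  have := isFiniteMeasure_qMix hq hμ
  have := isFiniteMeasure_qMix hq hν
  refine tvDist_le_of_integral_sub_le fun g hg hb => ?_
  have hm₁' : HasSum (fun k : ℕ => ((k + 1 : ℕ) : ℝ) * q (k + 1) * tvDist μ ν) (m₁ * tvDist μ ν) :=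
    by simpa using ((hasSum_nat_add_iff' 1).2 hm₁).mul_right (tvDist μ ν)
  refine hasSum_le (fun k => ?_)
    ((hasSum_integral_qMix hq hμ hg hb).sub (hasSum_integral_qMix hq hν hg hb)) hm₁'
  rw [← mul_sub, mul_comm _ (q (k + 1) : ℝ), mul_assoc]
  exact mul_le_mul_of_nonneg_left ((integral_sub_integral_le_tvDist hg hb).trans
    (tvDist_convPow_le hμ hν _)) (q _).coe_nonneg

lemma tvDist_conv_qMix_le {m₁ : ℝ} [IsFiniteMeasure μ] [IsFiniteMeasure ν]
    (hq : ∑' k, (q k : ℝ≥0∞) ≤ 1) (hm₁ : HasSum (fun k : ℕ => (k : ℝ) * q k) m₁)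
    (hμ : μ univ ≤ 1) (hν : ν univ ≤ 1) :
    tvDist (conv μ (qMix q μ)) (conv ν (qMix q ν)) ≤ (m₁ + 1) * tvDist μ ν := by
  have := isFiniteMeasure_qMix hq hμ
  have := isFiniteMeasure_qMix hq hν
  calc tvDist (conv μ (qMix q μ)) (conv ν (qMix q ν))
      ≤ tvDist μ ν + tvDist (qMix q μ) (qMix q ν) :=
        tvDist_conv_le hν (qMix_apply_univ_le_one hq hμ)
    _ ≤ tvDist μ ν + m₁ * tvDist μ ν := by gcongr; exact tvDist_qMix_le hq hm₁ hμ hν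
    _ = (m₁ + 1) * tvDist μ ν := by ring

lemma conv_qMix_apply_univ_le_one (hq : ∑' k, (q k : ℝ≥0∞) ≤ 1)
    (hμ : μ univ ≤ 1) : conv μ (qMix q μ) univ ≤ 1 := by
  have : IsFiniteMeasure μ := ⟨hμ.trans_lt ENNReal.one_lt_top⟩
  have := isFiniteMeasure_qMix hq hμ
  rw [conv_apply_univ]
  exact mul_le_one' hμ (qMix_apply_univ_le_one hq hμ)

end Convolution

section Measurability

/- The recursion only determines `∫ s in 0..t` of the integrand, which is `0` when the integrand
is not integrable; differences of such integrals can only be compared once the iterates are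
known to be measurable in time. -/

open ProbabilityTheory

lemma measurable_intervalIntegral_zero {W : ℝ → ℝ → ℝ} (hW : Measurable (Function.uncurry W)) :
    Measurable fun t => ∫ s in (0 : ℝ)..t, W t s := by
  have hIoc : ∀ l u : ℝ → ℝ, Measurable l → Measurable u →
      Measurable fun t => ∫ s in Ioc (l t) (u t), W t s := fun l u hl hu => by
    simp_rw [← integral_indicator measurableSet_Ioc]
    have hset : MeasurableSet {p : ℝ × ℝ | p.2 ∈ Ioc (l p.1) (u p.1)} :=
      (measurableSet_lt (hl.comp measurable_fst) measurable_snd).inter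
        (measurableSet_le measurable_snd (hu.comp measurable_fst))
    exact (StronglyMeasurable.integral_prod_right'
      (f := fun p : ℝ × ℝ => (Ioc (l p.1) (u p.1)).indicator (W p.1) p.2)
      (hW.indicator hset).stronglyMeasurable).measurable
  exact (hIoc 0 id measurable_const measurable_id).sub (hIoc id 0 measurable_id measurable_const)

variable {α : Type*} [MeasurableSpace α]

def convPowKernel (κ : Kernel α ℝ≥0) : ℕ → Kernel α ℝ≥0
  | 0 => Kernel.const α (Measure.dirac 0)
  | n + 1 => (convPowKernel κ n ×ₖ κ).map fun p => p.1 + p.2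

instance (κ : Kernel α ℝ≥0) [IsSFiniteKernel κ] (n : ℕ) : IsSFiniteKernel (convPowKernel κ n) := by
  induction n with
  | zero => unfold convPowKernel; infer_instance
  | succ n ih => unfold convPowKernel; infer_instance

lemma convPowKernel_apply (κ : Kernel α ℝ≥0) [IsSFiniteKernel κ] (n : ℕ) (x : α) :
    convPowKernel κ n x = convPow (κ x) n := by
  induction n with
  | zero => rfl
  | succ n ih => rw [convPowKernel, Kernel.map_apply _ measurable_add, Kernel.prod_apply, ih]; rfl

def qMixKernel (q : ℕ → ℝ≥0) (κ : Kernel α ℝ≥0) [IsSFiniteKernel κ] : Kernel α ℝ≥0 :=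
  Kernel.sum fun k => (convPowKernel κ (k + 1)).withDensity fun _ _ => q (k + 1)

instance (q : ℕ → ℝ≥0) (κ : Kernel α ℝ≥0) [IsSFiniteKernel κ] :
    IsSFiniteKernel (qMixKernel q κ) := by
  unfold qMixKernel; infer_instance

lemma qMixKernel_apply (q : ℕ → ℝ≥0) (κ : Kernel α ℝ≥0) [IsSFiniteKernel κ] (x : α) :
    qMixKernel q κ x = qMix q (κ x) := by
  simp only [qMixKernel, qMix, Kernel.sum_apply]
  congr with k : 1
  rw [Kernel.withDensity_apply _ measurable_const, withDensity_const, convPowKernel_apply]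

lemma measurable_integral_conv_qMix (q : ℕ → ℝ≥0) (κ : Kernel α ℝ≥0) [IsSFiniteKernel κ]
    {F : α × ℝ≥0 → ℝ} (hF : Measurable F) :
    Measurable fun x => ∫ y, F (x, y) ∂(conv (κ x) (qMix q (κ x))) := by
  have h : ∀ x, conv (κ x) (qMix q (κ x)) = ((κ ×ₖ qMixKernel q κ).map fun p => p.1 + p.2) x :=
    fun x => by rw [Kernel.map_apply _ measurable_add, Kernel.prod_apply, qMixKernel_apply]; rfl
  simp_rw [h]
  exact hF.stronglyMeasurable.integral_kernel_prod_right'.measurable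

end Measurability

lemma integral_mul_exp_mul_sub (a t : ℝ) :
    ∫ s in (0 : ℝ)..t, a * Real.exp (a * (s - t)) = 1 - Real.exp (-(a * t)) := by
  have hcont : Continuous fun s => a * Real.exp (a * (s - t)) := by fun_prop
  rw [intervalIntegral.integral_eq_sub_of_hasDerivAt (f := fun s => Real.exp (a * (s - t)))
    (fun s _ => ?_) (hcont.intervalIntegrable 0 t)]
  · simp only [sub_self, mul_zero, Real.exp_zero, zero_sub, mul_neg]
  · exact (((hasDerivAt_id s).sub_const t).const_mul a).exp.congr_deriv (by simp [mul_comm])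

section Mild

variable {a m₁ : ℝ} {q : ℕ → ℝ≥0} {μ₀ : Measure ℝ≥0} {ν ν₁ ν₂ ν' ν₁' ν₂' : ℝ → Measure ℝ≥0}

def mildIntegrand (a : ℝ) (q : ℕ → ℝ≥0) (ν : ℝ → Measure ℝ≥0) (f : ℝ≥0 → ℝ) (t s : ℝ) : ℝ :=
  Real.exp (a * (s - t)) * ∫ x, f (x - Real.toNNReal (t - s)) ∂(conv (ν s) (qMix q (ν s)))

def IsPicardStep (a : ℝ) (q : ℕ → ℝ≥0) (μ₀ : Measure ℝ≥0) (ν ν' : ℝ → Measure ℝ≥0) : Prop :=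
  ∀ f : ℝ≥0 → ℝ, Measurable f → (∃ C, ∀ x, |f x| ≤ C) → ∀ t : ℝ, 0 ≤ t →
    ∫ x, f x ∂(ν' t) = Real.exp (-(a * t)) * (∫ x, f (x - Real.toNNReal t) ∂μ₀)
      + a * ∫ s in (0 : ℝ)..t, mildIntegrand a q ν f t s

lemma abs_mildIntegrand_le_one (ha : 0 ≤ a) (hq : ∑' k, (q k : ℝ≥0∞) ≤ 1) {s t : ℝ}
    (hν : ν s univ ≤ 1) {f : ℝ≥0 → ℝ} (hb : ∀ x, |f x| ≤ 1) (hst : s ≤ t) :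
    |mildIntegrand a q ν f t s| ≤ 1 := by
  rw [mildIntegrand, abs_mul, Real.abs_exp]
  exact mul_le_one₀ (Real.exp_le_one_iff.2 (by nlinarith)) (abs_nonneg _)
    (abs_integral_le_one (conv_qMix_apply_univ_le_one hq hν) fun x => hb _)

lemma measurable_mildIntegrand (hν : Measurable ν) (hν₁ : ∀ s, ν s univ ≤ 1) {f : ℝ≥0 → ℝ}
    (hf : Measurable f) : Measurable (Function.uncurry (mildIntegrand a q ν f)) := by
  let κ : ProbabilityTheory.Kernel (ℝ × ℝ) ℝ≥0 := ⟨fun p => ν p.2, hν.comp measurable_snd⟩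
  have : ProbabilityTheory.IsFiniteKernel κ := ⟨⟨1, ENNReal.one_lt_top, fun p => hν₁ p.2⟩⟩
  exact (by fun_prop : Measurable fun p : ℝ × ℝ => Real.exp (a * (p.2 - p.1))).mul
    (measurable_integral_conv_qMix q κ
      (F := fun p => f (p.2 - Real.toNNReal (p.1.1 - p.1.2))) (by fun_prop))

lemma intervalIntegrable_mildIntegrand (ha : 0 ≤ a) (hq : ∑' k, (q k : ℝ≥0∞) ≤ 1)
    (hν : Measurable ν) (hν₁ : ∀ s, ν s univ ≤ 1) {f : ℝ≥0 → ℝ} (hf : Measurable f)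
    (hb : ∀ x, |f x| ≤ 1) {t : ℝ} (ht : 0 ≤ t) :
    IntervalIntegrable (mildIntegrand a q ν f t) volume 0 t := by
  rw [intervalIntegrable_iff_integrableOn_Ioc_of_le ht]
  refine Integrable.mono' (integrable_const 1)
    ((measurable_mildIntegrand hν hν₁ hf).comp measurable_prodMk_left).aestronglyMeasurable ?_
  refine (ae_restrict_iff' measurableSet_Ioc).2 (ae_of_all _ fun s hs => ?_)
  simpa using abs_mildIntegrand_le_one ha hq (hν₁ s) hb hs.2

lemma mildIntegrand_sub_le (ha : 0 ≤ a) (hq : ∑' k, (q k : ℝ≥0∞) ≤ 1)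
    (hm₁ : HasSum (fun k : ℕ => (k : ℝ) * q k) m₁) {s t : ℝ} (hν₁ : ν₁ s univ ≤ 1)
    (hν₂ : ν₂ s univ ≤ 1) {f : ℝ≥0 → ℝ} (hf : Measurable f) (hb : ∀ x, |f x| ≤ 1) (hst : s ≤ t) :
    mildIntegrand a q ν₁ f t s - mildIntegrand a q ν₂ f t s ≤ (m₁ + 1) * tvDist (ν₁ s) (ν₂ s) := by
  have : IsFiniteMeasure (ν₁ s) := ⟨hν₁.trans_lt ENNReal.one_lt_top⟩
  have : IsFiniteMeasure (ν₂ s) := ⟨hν₂.trans_lt ENNReal.one_lt_top⟩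
  have := isFiniteMeasure_qMix hq hν₁
  have := isFiniteMeasure_qMix hq hν₂
  have hm₁0 : 0 ≤ m₁ := hm₁.nonneg fun k => by positivity
  have hD := (integral_sub_integral_le_tvDist
    (hf.comp (measurable_sub_const (Real.toNNReal (t - s)))) fun x => hb _).trans
    (tvDist_conv_qMix_le hq hm₁ hν₁ hν₂)
  rw [mildIntegrand, mildIntegrand, ← mul_sub]
  exact (mul_le_mul_of_nonneg_left hD (Real.exp_nonneg _)).trans (mul_le_of_le_one_left
    (mul_nonneg (by linarith) tvDist_nonneg) (Real.exp_le_one_iff.2 (by nlinarith)))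

-- Nothing is known about the iterates at negative times; cutting them off there yields
-- measurable families without changing the recursion.
lemma IsPicardStep.indicator_Ici (h : IsPicardStep a q μ₀ ν ν') :
    IsPicardStep a q μ₀ ((Ici 0).indicator ν) ν' := by
  intro f hf hC t ht
  rw [h f hf hC t ht]
  congr 2
  refine intervalIntegral.integral_congr fun s hs => ?_
  rw [uIcc_of_le ht] at hs
  simp only [mildIntegrand, indicator_of_mem (mem_Ici.2 hs.1)]

lemma IsPicardStep.measure_univ_le_one (h : IsPicardStep a q μ₀ ν ν') (ha : 0 ≤ a)
    (hq : ∑' k, (q k : ℝ≥0∞) ≤ 1) [IsProbabilityMeasure μ₀] (hν : ∀ s, ν s univ ≤ 1) {t : ℝ}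
    [IsFiniteMeasure (ν' t)] (ht : 0 ≤ t) : ν' t univ ≤ 1 := by
  have hone := h (fun _ => 1) measurable_const ⟨1, fun _ => by simp⟩ t ht
  simp only [integral_const, smul_eq_mul, mul_one, probReal_univ] at hone
  have hle : a * ∫ s in (0 : ℝ)..t, mildIntegrand a q ν (fun _ => 1) t s
      ≤ 1 - Real.exp (-(a * t)) := by
    rw [← integral_mul_exp_mul_sub, ← intervalIntegral.integral_const_mul,
      intervalIntegral.integral_of_le ht, intervalIntegral.integral_of_le ht]
    refine integral_mono_of_nonneg (ae_of_all _ fun s => ?_)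
      (by fun_prop : Continuous fun s => a * Real.exp (a * (s - t))).integrableOn_Ioc
      (ae_of_all _ fun s => ?_)
    · simp only [mildIntegrand, integral_const, smul_eq_mul, mul_one, Pi.zero_apply]
      positivity
    · simp only [mildIntegrand, integral_const, smul_eq_mul, mul_one]
      refine mul_le_mul_of_nonneg_left (mul_le_of_le_one_right (Real.exp_nonneg _) ?_) ha
      exact ENNReal.toReal_le_of_le_ofReal zero_le_one
        (by simpa using conv_qMix_apply_univ_le_one hq (hν s))
  rw [← ofReal_measureReal (measure_ne_top _ _), hone]
  exact ENNReal.ofReal_le_one.2 (by linarith)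

lemma IsPicardStep.measurable_indicator_Ici (h : IsPicardStep a q μ₀ ν ν') (hν : Measurable ν)
    (hν₁ : ∀ s, ν s univ ≤ 1) [SFinite μ₀] [∀ t, IsFiniteMeasure (ν' t)] :
    Measurable ((Ici 0).indicator ν') := by
  refine Measure.measurable_of_measurable_coe _ fun A hA => ?_
  have hg : Measurable (A.indicator (1 : ℝ≥0 → ℝ)) := measurable_one.indicator hA
  have hgb : ∀ x, |A.indicator (1 : ℝ≥0 → ℝ) x| ≤ 1 := fun x => by
    by_cases hx : x ∈ A <;> simp [hx]
  have key : (fun t => (Ici 0).indicator ν' t A) = (Ici 0).indicator fun t => ENNReal.ofReal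
      (Real.exp (-(a * t)) * (∫ x, A.indicator 1 (x - Real.toNNReal t) ∂μ₀)
        + a * ∫ s in (0 : ℝ)..t, mildIntegrand a q ν (A.indicator 1) t s) := by
    funext t
    by_cases ht : t ∈ Ici 0
    · rw [indicator_of_mem ht, indicator_of_mem ht, ← h _ hg ⟨1, hgb⟩ t ht,
        integral_indicator_one hA, ofReal_measureReal (measure_ne_top _ _)]
    · simp [indicator_of_notMem ht]
  rw [key]
  refine (ENNReal.measurable_ofReal.comp (Measurable.add ?_ ?_)).indicator measurableSet_Ici
  · exact (by fun_prop : Measurable fun t : ℝ => Real.exp (-(a * t))).mul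
      (StronglyMeasurable.integral_prod_right' (ν := μ₀)
        (f := fun p : ℝ × ℝ≥0 => A.indicator 1 (p.2 - Real.toNNReal p.1))
        (hg.comp (by fun_prop)).stronglyMeasurable).measurable
  · exact (measurable_intervalIntegral_zero (measurable_mildIntegrand hν hν₁ hg)).const_mul a

lemma IsPicardStep.tvDist_le (h₁ : IsPicardStep a q μ₀ ν₁ ν₁') (h₂ : IsPicardStep a q μ₀ ν₂ ν₂')
    (ha : 0 ≤ a) (hq : ∑' k, (q k : ℝ≥0∞) ≤ 1) (hm₁ : HasSum (fun k : ℕ => (k : ℝ) * q k) m₁)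
    (hν₁ : Measurable ν₁) (hν₂ : Measurable ν₂) (hν₁₁ : ∀ s, ν₁ s univ ≤ 1)
    (hν₂₁ : ∀ s, ν₂ s univ ≤ 1) {t : ℝ} [IsFiniteMeasure (ν₁' t)] [IsFiniteMeasure (ν₂' t)]
    (ht : 0 ≤ t) {B : ℝ → ℝ} (hB : IntervalIntegrable B volume 0 t)
    (hB_le : ∀ s ∈ Icc 0 t, tvDist (ν₁ s) (ν₂ s) ≤ B s) :
    tvDist (ν₁' t) (ν₂' t) ≤ a * (m₁ + 1) * ∫ s in (0 : ℝ)..t, B s := by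
  have hm₁0 : 0 ≤ m₁ := hm₁.nonneg fun k => by positivity
  refine tvDist_le_of_integral_sub_le fun f hf hb => ?_
  have hi₁ := intervalIntegrable_mildIntegrand ha hq hν₁ hν₁₁ hf hb ht
  have hi₂ := intervalIntegrable_mildIntegrand ha hq hν₂ hν₂₁ hf hb ht
  rw [h₁ f hf ⟨1, hb⟩ t ht, h₂ f hf ⟨1, hb⟩ t ht, add_sub_add_left_eq_sub, ← mul_sub,
    ← intervalIntegral.integral_sub hi₁ hi₂, mul_assoc,
    ← intervalIntegral.integral_const_mul (m₁ + 1)]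
  refine mul_le_mul_of_nonneg_left (intervalIntegral.integral_mono_on ht (hi₁.sub hi₂)
    (hB.const_mul _) fun s hs => ?_) ha
  exact (mildIntegrand_sub_le ha hq hm₁ (hν₁₁ s) (hν₂₁ s) hf hb hs.2).trans
    (mul_le_mul_of_nonneg_left (hB_le s hs) (by linarith))

end Mild

lemma mul_integral_mul_pow_div_factorial (c t : ℝ) (n : ℕ) :
    c * ∫ s in (0 : ℝ)..t, (c * s) ^ n / n.factorial = (c * t) ^ (n + 1) / (n + 1).factorial := by
  simp_rw [mul_pow, mul_div_assoc]
  rw [intervalIntegral.integral_const_mul, intervalIntegral.integral_div, integral_pow,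
    Nat.factorial_succ]
  push_cast
  field_simp
  ring

lemma tvDist_le_two_mul_tsum {μ : ℕ → Measure ℝ≥0} [∀ n, IsFiniteMeasure (μ n)] {x : ℝ}
    (hx : 0 ≤ x) (h : ∀ k, tvDist (μ k) (μ (k + 1)) ≤ 2 * x ^ k / k.factorial) {n m : ℕ}
    (hnm : n ≤ m) : tvDist (μ n) (μ m) ≤ 2 * ∑' k, x ^ (k + n) / (k + n).factorial := by
  obtain ⟨p, rfl⟩ := Nat.exists_eq_add_of_le hnm
  calc tvDist (μ n) (μ (n + p))
      ≤ ∑ k ∈ Finset.range p, tvDist (μ (n + k)) (μ (n + k + 1)) := tvDist_le_sum_range μ n p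
    _ ≤ ∑ k ∈ Finset.range p, 2 * (x ^ (k + n) / (k + n).factorial) :=
        Finset.sum_le_sum fun k _ => by rw [add_comm k n, ← mul_div_assoc]; exact h _
    _ ≤ 2 * ∑' k, x ^ (k + n) / (k + n).factorial := by
        rw [← Finset.mul_sum]
        gcongr
        exact ((Real.summable_pow_div_factorial x).comp_injective
          (add_left_injective n)).sum_le_tsum _ fun k _ => by positivity

def IsPicardSequence (a : ℝ) (q : ℕ → ℝ≥0) (μ₀ : Measure ℝ≥0) (μ : ℕ → ℝ → Measure ℝ≥0) :
    Prop :=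
  (∀ t : ℝ, 0 ≤ t →
    μ 0 t = ENNReal.ofReal (Real.exp (-(a * t))) • μ₀.map (fun x => x - Real.toNNReal t)) ∧
  ∀ n, IsPicardStep a q μ₀ (μ n) (μ (n + 1))

lemma indicator_Ici_apply_univ_le_one {ν : ℝ → Measure ℝ≥0} (h : ∀ t, 0 ≤ t → ν t univ ≤ 1)
    (s : ℝ) : (Ici 0).indicator ν s univ ≤ 1 := by
  by_cases hs : 0 ≤ s <;> simp [indicator, hs, h]

namespace IsPicardSequence

variable {a m₁ : ℝ} {q : ℕ → ℝ≥0} {μ₀ : Measure ℝ≥0} [IsProbabilityMeasure μ₀]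
  {μ : ℕ → ℝ → Measure ℝ≥0}

lemma measure_univ_le_one (hμ : IsPicardSequence a q μ₀ μ) (ha : 0 ≤ a)
    (hq : ∑' k, (q k : ℝ≥0∞) ≤ 1) (hfin : ∀ n t, IsFiniteMeasure (μ n t)) :
    ∀ n t, 0 ≤ t → μ n t univ ≤ 1
  | 0, t, ht => by
    rw [hμ.1 t ht, Measure.smul_apply, Measure.map_apply (measurable_sub_const _) .univ,
      preimage_univ, measure_univ, smul_eq_mul, mul_one, ENNReal.ofReal_le_one]
    exact Real.exp_le_one_iff.2 (by nlinarith)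
  | n + 1, t, ht => (hμ.2 n).indicator_Ici.measure_univ_le_one ha hq
      (indicator_Ici_apply_univ_le_one (hμ.measure_univ_le_one ha hq hfin n)) ht

lemma measurable_indicator_Ici (hμ : IsPicardSequence a q μ₀ μ) (ha : 0 ≤ a)
    (hq : ∑' k, (q k : ℝ≥0∞) ≤ 1) (hfin : ∀ n t, IsFiniteMeasure (μ n t)) :
    ∀ n, Measurable ((Ici 0).indicator (μ n))
  | 0 => by
    rw [indicator_congr (s := Ici 0) fun t ht => hμ.1 t ht]
    refine (Measure.measurable_of_measurable_coe _ fun A hA => ?_).indicator measurableSet_Ici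
    simp_rw [Measure.smul_apply, Measure.map_apply (measurable_sub_const _) hA, smul_eq_mul]
    exact (by fun_prop : Measurable fun t : ℝ => ENNReal.ofReal (Real.exp (-(a * t)))).mul
      (measurable_measure_prodMk_left (ν := μ₀)
        ((by fun_prop : Measurable fun p : ℝ × ℝ≥0 => p.2 - Real.toNNReal p.1) hA))
  | n + 1 => (hμ.2 n).indicator_Ici.measurable_indicator_Ici
      (hμ.measurable_indicator_Ici ha hq hfin n)
      (indicator_Ici_apply_univ_le_one (hμ.measure_univ_le_one ha hq hfin n))

lemma tvDist_succ_le (hμ : IsPicardSequence a q μ₀ μ) (ha : 0 ≤ a)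
    (hq : ∑' k, (q k : ℝ≥0∞) ≤ 1) (hm₁ : HasSum (fun k : ℕ => (k : ℝ) * q k) m₁)
    (hfin : ∀ n t, IsFiniteMeasure (μ n t)) :
    ∀ n t, 0 ≤ t → tvDist (μ n t) (μ (n + 1) t) ≤ 2 * (a * (m₁ + 1) * t) ^ n / n.factorial
  | 0, t, ht => by
    have hreal : ∀ n, (μ n t).real univ ≤ 1 := fun n => ENNReal.toReal_le_of_le_ofReal zero_le_one
      (by simpa using hμ.measure_univ_le_one ha hq hfin n t ht)
    simpa [one_add_one_eq_two] using
      tvDist_le_measureReal_univ_add.trans (add_le_add (hreal 0) (hreal 1))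
  | n + 1, t, ht => by
    have hmeas := hμ.measurable_indicator_Ici ha hq hfin
    have hmass n := indicator_Ici_apply_univ_le_one (hμ.measure_univ_le_one ha hq hfin n)
    set c := a * (m₁ + 1)
    calc tvDist (μ (n + 1) t) (μ (n + 1 + 1) t)
        ≤ c * ∫ s in (0 : ℝ)..t, 2 * ((c * s) ^ n / n.factorial) :=
          (hμ.2 n).indicator_Ici.tvDist_le (hμ.2 (n + 1)).indicator_Ici ha hq hm₁ (hmeas n)
            (hmeas (n + 1)) (hmass n) (hmass (n + 1)) ht
            ((by fun_prop : Continuous fun s => 2 * ((c * s) ^ n / n.factorial)).intervalIntegrable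
              0 t) fun s hs => by
            simpa only [indicator_of_mem (mem_Ici.2 hs.1), ← mul_div_assoc]
              using hμ.tvDist_succ_le ha hq hm₁ hfin n s hs.1
      _ = 2 * (c * t) ^ (n + 1) / (n + 1).factorial := by
        rw [intervalIntegral.integral_const_mul, mul_left_comm,
          mul_integral_mul_pow_div_factorial, mul_div_assoc]

end IsPicardSequence

theorem picard_iterates_cauchy_tv_general (a m₁ : ℝ) (ha : 0 ≤ a)
    (q : ℕ → ℝ≥0) (hq1 : ∑' k, q k = 1)
    (hm₁ : HasSum (fun k : ℕ => (k : ℝ) * (q k : ℝ)) m₁)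
    (μ₀ : Measure ℝ≥0) [IsProbabilityMeasure μ₀]
    (μ : ℕ → ℝ → Measure ℝ≥0)
    (hfin : ∀ n t, IsFiniteMeasure (μ n t))
    (h0 : ∀ t : ℝ, 0 ≤ t →
      μ 0 t = (ENNReal.ofReal (Real.exp (-(a * t)))) •
        (μ₀.map (fun x => x - Real.toNNReal t)))
    (hrec : ∀ n : ℕ, ∀ f : ℝ≥0 → ℝ, Measurable f → (∃ C, ∀ x, |f x| ≤ C) →
      ∀ t : ℝ, 0 ≤ t →
      ∫ x, f x ∂(μ (n + 1) t)
        = Real.exp (-(a * t)) * (∫ x, f (x - Real.toNNReal t) ∂μ₀)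
          + a * ∫ s in (0:ℝ)..t, Real.exp (a * (s - t)) *
              ∫ x, f (x - Real.toNNReal (t - s)) ∂(conv (μ n s) (qMix q (μ n s)))) :
    ∀ m n : ℕ, 1 ≤ n → n < m → ∀ t : ℝ, 0 ≤ t →
      tvDist (μ n t) (μ m t)
        ≤ 2 * ∑' k : ℕ, (a * (m₁ + 1) * t) ^ (k + n) / (Nat.factorial (k + n)) := by
  intro m n _ hnm t ht
  have hq : ∑' k, (q k : ℝ≥0∞) ≤ 1 := by
    have hs : Summable q := by
      by_contra h
      simp [tsum_eq_zero_of_not_summable h] at hq1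
    rw [← ENNReal.coe_tsum hs, hq1, ENNReal.coe_one]
  have hμ : IsPicardSequence a q μ₀ μ := ⟨h0, hrec⟩
  have hm₁0 : 0 ≤ m₁ := hm₁.nonneg fun k => by positivity
  exact tvDist_le_two_mul_tsum (μ := fun k => μ k t) (by positivity)
    (fun k => hμ.tvDist_succ_le ha hq hm₁ hfin k t ht) hnm.le

/-- The Picard iterates for the CDR mild equation form a Cauchy sequence in total
variation, uniformly on compact time intervals. -/
theorem picard_iterates_cauchy_tv (a m₁ : ℝ) (ha : 0 ≤ a)
    (q : ℕ → ℝ≥0) (hq0 : q 0 = 0) (hq1 : ∑' k, q k = 1)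
    (hm₁ : HasSum (fun k : ℕ => (k : ℝ) * (q k : ℝ)) m₁)
    (μ₀ : Measure ℝ≥0) [IsProbabilityMeasure μ₀]
    (μ : ℕ → ℝ → Measure ℝ≥0)
    (hfin : ∀ n t, IsFiniteMeasure (μ n t))
    (h0 : ∀ t : ℝ, 0 ≤ t →
      μ 0 t = (ENNReal.ofReal (Real.exp (-(a * t)))) •
        (μ₀.map (fun x => x - Real.toNNReal t)))
    (hrec : ∀ n : ℕ, ∀ f : ℝ≥0 → ℝ, Measurable f → (∃ C, ∀ x, |f x| ≤ C) →
      ∀ t : ℝ, 0 ≤ t →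
      ∫ x, f x ∂(μ (n + 1) t)
        = Real.exp (-(a * t)) * (∫ x, f (x - Real.toNNReal t) ∂μ₀)
          + a * ∫ s in (0:ℝ)..t, Real.exp (a * (s - t)) *
              ∫ x, f (x - Real.toNNReal (t - s)) ∂(conv (μ n s) (qMix q (μ n s)))) :
    ∀ m n : ℕ, 1 ≤ n → n < m → ∀ t : ℝ, 0 ≤ t →
      tvDist (μ n t) (μ m t)
        ≤ 2 * ∑' k : ℕ, (a * (m₁ + 1) * t) ^ (k + n) / (Nat.factorial (k + n)) :=
  picard_iterates_cauchy_tv_general a m₁ ha q hq1 hm₁ μ₀ μ hfin h0 hrec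
end
end

section
/- Let g(z) = Σ_{k=1}^∞ q_k z^{k+1} for a probability distribution q on {1,2,…} with finite first moment m₁. Then g is Lipschitz on [0,1] with Lipschitz constant m₁ + 1, and the unique continuous solution h: [0,∞) → [0,1] of the integral equation h(t) = e^{−at} + a∫₀ᵗ e^{a(s−t)} g(h(s)) ds with a ≥ 0 is h ≡ 1. -/
open MeasureTheory ProbabilityTheory Filter
open Set intervalIntegral
open scoped ENNReal NNReal

noncomputable section

private lemma pow_lip {z w : ℝ} (hz : z ∈ Set.Icc (0:ℝ) 1) (hw : w ∈ Set.Icc (0:ℝ) 1) :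
    ∀ n : ℕ, |z ^ n - w ^ n| ≤ n * |z - w| := by
  intro n
  induction n with
  | zero => simp
  | succ n ih =>
    have hz1 : |z| ≤ 1 := abs_le.2 ⟨by linarith [hz.1], hz.2⟩
    have hw1 : |w ^ n| ≤ 1 := by
      rw [abs_pow]
      exact pow_le_one₀ (abs_nonneg w) (abs_le.2 ⟨by linarith [hw.1], hw.2⟩)
    have hiden : z ^ (n+1) - w ^ (n+1) = z * (z ^ n - w ^ n) + (z - w) * w ^ n := by ring
    have h1 : |z * (z ^ n - w ^ n)| ≤ |z ^ n - w ^ n| := by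
      rw [abs_mul]
      exact mul_le_of_le_one_left (abs_nonneg _) hz1
    have h2 : |(z - w) * w ^ n| ≤ |z - w| := by
      rw [abs_mul]
      exact mul_le_of_le_one_right (abs_nonneg _) hw1
    calc |z ^ (n+1) - w ^ (n+1)| ≤ |z * (z ^ n - w ^ n)| + |(z - w) * w ^ n| := by
          rw [hiden]; exact abs_add_le _ _
      _ ≤ n * |z - w| + |z - w| := by linarith [ih]
      _ = ((n+1 : ℕ) : ℝ) * |z - w| := by push_cast; ring

private lemma qsummable {q : ℕ → ℝ≥0} (hq1 : ∑' k, q k = 1) :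
    Summable (fun k => (q k : ℝ)) := by
  have hqs : Summable q := by
    by_contra hs
    rw [tsum_eq_zero_of_not_summable hs] at hq1
    exact one_ne_zero hq1.symm
  exact NNReal.summable_coe.2 hqs

private lemma qhasSum {q : ℕ → ℝ≥0} (hq1 : ∑' k, q k = 1) :
    HasSum (fun k => (q k : ℝ)) 1 := by
  have hqs : Summable q := NNReal.summable_coe.1 (qsummable hq1)
  have := hqs.hasSum
  rw [hq1] at this
  simpa using NNReal.hasSum_coe.2 this

private lemma gsummable {q : ℕ → ℝ≥0} (hq1 : ∑' k, q k = 1) {z : ℝ}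
    (hz : z ∈ Set.Icc (0:ℝ) 1) : Summable (fun k : ℕ => (q k : ℝ) * z ^ (k + 1)) := by
  refine Summable.of_nonneg_of_le
    (fun k => mul_nonneg (q k).coe_nonneg (pow_nonneg hz.1 _)) (fun k => ?_) (qsummable hq1)
  calc (q k : ℝ) * z ^ (k+1) ≤ (q k : ℝ) * 1 := by
        gcongr
        exact pow_le_one₀ hz.1 hz.2
    _ = q k := mul_one _

private lemma key_lip {m₁ : ℝ} {q : ℕ → ℝ≥0} (hq1 : ∑' k, q k = 1)
    (hm₁ : HasSum (fun k : ℕ => (k : ℝ) * (q k : ℝ)) m₁) :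
    ∀ z w : ℝ, z ∈ Set.Icc (0:ℝ) 1 → w ∈ Set.Icc (0:ℝ) 1 →
      |(∑' k : ℕ, (q k : ℝ) * z ^ (k + 1)) - ∑' k : ℕ, (q k : ℝ) * w ^ (k + 1)|
        ≤ (m₁ + 1) * |z - w| := by
  intro z w hz hw
  have hM : HasSum (fun k : ℕ => ((k : ℝ) + 1) * (q k : ℝ)) (m₁ + 1) := by
    simpa [add_mul] using hm₁.add (qhasSum hq1)
  have hMd : HasSum (fun k : ℕ => ((k : ℝ) + 1) * (q k : ℝ) * |z - w|) ((m₁ + 1) * |z - w|) :=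
    hM.mul_right _
  have hsz := gsummable hq1 hz
  have hsw := gsummable hq1 hw
  have hbound : ∀ k : ℕ, |(q k : ℝ) * z ^ (k+1) - (q k : ℝ) * w ^ (k+1)|
      ≤ ((k : ℝ) + 1) * (q k : ℝ) * |z - w| := by
    intro k
    have := pow_lip hz hw (k+1)
    calc |(q k : ℝ) * z ^ (k+1) - (q k : ℝ) * w ^ (k+1)|
        = (q k : ℝ) * |z ^ (k+1) - w ^ (k+1)| := by
          rw [← mul_sub, abs_mul, abs_of_nonneg (q k).coe_nonneg]
      _ ≤ (q k : ℝ) * (((k : ℕ) + 1 : ℕ) * |z - w|) := by gcongr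
      _ = ((k : ℝ) + 1) * (q k : ℝ) * |z - w| := by push_cast; ring
  have habs : Summable (fun k : ℕ => |(q k : ℝ) * z ^ (k+1) - (q k : ℝ) * w ^ (k+1)|) :=
    Summable.of_nonneg_of_le (fun k => abs_nonneg _) hbound hMd.summable
  calc |(∑' k : ℕ, (q k : ℝ) * z ^ (k + 1)) - ∑' k : ℕ, (q k : ℝ) * w ^ (k + 1)|
      = |∑' k : ℕ, ((q k : ℝ) * z ^ (k + 1) - (q k : ℝ) * w ^ (k + 1))| := by
        rw [Summable.tsum_sub hsz hsw]
    _ ≤ ∑' k : ℕ, |(q k : ℝ) * z ^ (k + 1) - (q k : ℝ) * w ^ (k + 1)| := by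
        have habs' : Summable (fun k : ℕ =>
            ‖(q k : ℝ) * z ^ (k+1) - (q k : ℝ) * w ^ (k+1)‖) := by
          simpa only [Real.norm_eq_abs] using habs
        have hnt := norm_tsum_le_tsum_norm habs'
        simpa only [Real.norm_eq_abs] using hnt
    _ ≤ ∑' k : ℕ, ((k : ℝ) + 1) * (q k : ℝ) * |z - w| := Summable.tsum_le_tsum hbound habs hMd.summable
    _ = (m₁ + 1) * |z - w| := hMd.tsum_eq

set_option maxHeartbeats 1000000 in
private lemma unique_sol (a K : ℝ) (ha : 0 < a) (hK : 0 ≤ K) (G : ℝ → ℝ)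
    (hGc : ContinuousOn G (Set.Icc 0 1)) (hG1 : G 1 = 1)
    (hGlip : ∀ z ∈ Set.Icc (0:ℝ) 1, |G z - 1| ≤ K * |z - 1|)
    (h : ℝ → ℝ) (hc : Continuous h) (hrange : ∀ t, 0 ≤ t → h t ∈ Set.Icc (0:ℝ) 1)
    (heq : ∀ t : ℝ, 0 ≤ t → h t = Real.exp (-(a*t))
        + a * ∫ s in (0:ℝ)..t, Real.exp (a*(s-t)) * G (h s)) :
    ∀ t, 0 ≤ t → h t = 1 := by
  have hGh : ContinuousOn (fun s => G (h s)) (Set.Ici 0) :=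
    hGc.comp hc.continuousOn (fun s hs => hrange s hs)
  set φ : ℝ → ℝ := fun t => ∫ s in (0:ℝ)..t, |h s - 1| with hφdef
  have hcont1 : Continuous (fun s => |h s - 1|) := (hc.sub continuous_const).abs
  have hd : ∀ t, HasDerivAt φ (|h t - 1|) t := fun t =>
    intervalIntegral.integral_hasDerivAt_right (hcont1.intervalIntegrable _ _)
      (hcont1.stronglyMeasurableAtFilter _ _) hcont1.continuousAt
  have hφcont : Continuous φ := continuous_iff_continuousAt.2 fun t => (hd t).continuousAt
  have hφnonneg : ∀ t, 0 ≤ t → 0 ≤ φ t := fun t ht =>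
    intervalIntegral.integral_nonneg ht (fun s _ => abs_nonneg _)
  -- the exponential integral
  have hexp_int : ∀ t : ℝ, (∫ s in (0:ℝ)..t, Real.exp (a*(s-t)))
      = (1 - Real.exp (-(a*t)))/a := by
    intro t
    have h1 : ∀ s : ℝ, Real.exp (a*(s-t)) = Real.exp (-(a*t)) * Real.exp (a*s) := fun s => by
      rw [← Real.exp_add]; ring_nf
    have e : Real.exp (-(a*t)) * Real.exp (a*t) = 1 := by rw [← Real.exp_add]; simp
    calc (∫ s in (0:ℝ)..t, Real.exp (a*(s-t)))
        = ∫ s in (0:ℝ)..t, Real.exp (-(a*t)) * Real.exp (a*s) := by simp_rw [h1]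
      _ = Real.exp (-(a*t)) * ∫ s in (0:ℝ)..t, Real.exp (a*s) :=
          intervalIntegral.integral_const_mul _ _
      _ = Real.exp (-(a*t)) * (a⁻¹ * (Real.exp (a*t) - 1)) := by
          rw [intervalIntegral.integral_comp_mul_left (fun x => Real.exp x) ha.ne']
          simp [integral_exp]
      _ = (1 - Real.exp (-(a*t)))/a := by
          rw [eq_div_iff ha.ne']
          field_simp
          linear_combination e
  -- the difference form of the equation
  have hdiff : ∀ t : ℝ, 0 ≤ t →
      h t - 1 = a * ∫ s in (0:ℝ)..t, Real.exp (a*(s-t)) * (G (h s) - 1) := by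
    intro t ht
    have hsub : Set.uIcc (0:ℝ) t ⊆ Set.Ici 0 := by
      rw [Set.uIcc_of_le ht]; exact fun x hx => hx.1
    have hI1 : IntervalIntegrable (fun s => Real.exp (a*(s-t)) * G (h s)) volume 0 t := by
      apply ContinuousOn.intervalIntegrable
      exact ((Real.continuous_exp.comp (by continuity)).continuousOn).mul (hGh.mono hsub)
    have hI2 : IntervalIntegrable (fun s => Real.exp (a*(s-t))) volume 0 t :=
      (Real.continuous_exp.comp (by continuity)).intervalIntegrable _ _
    have hsplit : (∫ s in (0:ℝ)..t, Real.exp (a*(s-t)) * (G (h s) - 1))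
        = (∫ s in (0:ℝ)..t, Real.exp (a*(s-t)) * G (h s))
          - ∫ s in (0:ℝ)..t, Real.exp (a*(s-t)) := by
      rw [← intervalIntegral.integral_sub hI1 hI2]
      congr 1; funext s; ring
    rw [hsplit, hexp_int t, heq t ht]
    field_simp
    ring
  -- the key integral inequality
  have hkey : ∀ t : ℝ, 0 ≤ t → |h t - 1| ≤ (a*K) * φ t := by
    intro t ht
    have hsub : Set.uIcc (0:ℝ) t ⊆ Set.Ici 0 := by
      rw [Set.uIcc_of_le ht]; exact fun x hx => hx.1
    have hIabs : IntervalIntegrable (fun s => |Real.exp (a*(s-t)) * (G (h s) - 1)|)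
        volume 0 t := by
      apply ContinuousOn.intervalIntegrable
      exact (((Real.continuous_exp.comp (by continuity)).continuousOn).mul
        ((hGh.mono hsub).sub continuousOn_const)).abs
    have hIK : IntervalIntegrable (fun s => K * |h s - 1|) volume 0 t :=
      (continuous_const.mul hcont1).intervalIntegrable _ _
    have hptw : ∀ s ∈ Set.Icc (0:ℝ) t,
        |Real.exp (a*(s-t)) * (G (h s) - 1)| ≤ K * |h s - 1| := by
      intro s hs
      have he1 : Real.exp (a*(s-t)) ≤ 1 :=
        Real.exp_le_one_iff.2 (mul_nonpos_of_nonneg_of_nonpos ha.le (sub_nonpos.2 hs.2))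
      have hlip := hGlip (h s) (hrange s hs.1)
      calc |Real.exp (a*(s-t)) * (G (h s) - 1)|
          = Real.exp (a*(s-t)) * |G (h s) - 1| := by
            rw [abs_mul, abs_of_nonneg (Real.exp_nonneg _)]
        _ ≤ 1 * (K * |h s - 1|) := by
            apply mul_le_mul he1 hlip (abs_nonneg _) zero_le_one
        _ = K * |h s - 1| := one_mul _
    calc |h t - 1| = a * |∫ s in (0:ℝ)..t, Real.exp (a*(s-t)) * (G (h s) - 1)| := by
          rw [hdiff t ht, abs_mul, abs_of_nonneg ha.le]
      _ ≤ a * ∫ s in (0:ℝ)..t, |Real.exp (a*(s-t)) * (G (h s) - 1)| := by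
          apply mul_le_mul_of_nonneg_left
            (intervalIntegral.abs_integral_le_integral_abs ht) ha.le
      _ ≤ a * ∫ s in (0:ℝ)..t, K * |h s - 1| := by
          apply mul_le_mul_of_nonneg_left
            (intervalIntegral.integral_mono_on ht hIabs hIK hptw) ha.le
      _ = (a*K) * φ t := by
          rw [intervalIntegral.integral_const_mul]; ring
  -- Gronwall
  intro t ht
  have hbound : ∀ x ∈ Set.Ico 0 t, ‖|h x - 1|‖ ≤ (a*K) * ‖φ x‖ + 0 := by
    intro x hx
    rw [Real.norm_eq_abs, Real.norm_eq_abs, abs_abs, abs_of_nonneg (hφnonneg x hx.1), add_zero]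
    exact hkey x hx.1
  have hφ00 : ‖φ 0‖ ≤ (0:ℝ) := by simp [hφdef]
  have hgron := norm_le_gronwallBound_of_norm_deriv_right_le (f := φ)
    (f' := fun x => |h x - 1|) (δ := 0) (K := a*K) (ε := 0) (a := 0) (b := t)
    hφcont.continuousOn (fun x _ => (hd x).hasDerivWithinAt)
    hφ00 hbound t (Set.right_mem_Icc.2 ht)
  rw [Real.norm_eq_abs, abs_of_nonneg (hφnonneg t ht), sub_zero, gronwallBound_ε0,
      zero_mul] at hgron
  have hφ0 : φ t = 0 := le_antisymm hgron (hφnonneg t ht)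
  have h1 := hkey t ht
  rw [hφ0, mul_zero] at h1
  have h2 : |h t - 1| = 0 := le_antisymm h1 (abs_nonneg _)
  have := abs_eq_zero.1 h2
  linarith

/-- The generating-type function `g(z) = Σ q_k z^{k+1}` is `(m₁+1)`-Lipschitz on `[0,1]`,
and the unique continuous `[0,1]`-valued solution of
`h(t) = e^{−at} + a∫₀ᵗ e^{a(s−t)} g(h(s)) ds` is `h ≡ 1`. -/
theorem generating_function_lipschitz_and_unique_solution (a m₁ : ℝ) (ha : 0 ≤ a)
    (q : ℕ → ℝ≥0) (hq0 : q 0 = 0) (hq1 : ∑' k, q k = 1)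
    (hm₁ : HasSum (fun k : ℕ => (k : ℝ) * (q k : ℝ)) m₁) :
    (∀ z w : ℝ, z ∈ Set.Icc (0:ℝ) 1 → w ∈ Set.Icc (0:ℝ) 1 →
      |(∑' k : ℕ, (q k : ℝ) * z ^ (k + 1)) - ∑' k : ℕ, (q k : ℝ) * w ^ (k + 1)|
        ≤ (m₁ + 1) * |z - w|) ∧
    (∀ h : ℝ → ℝ, Continuous h → (∀ t : ℝ, 0 ≤ t → h t ∈ Set.Icc (0:ℝ) 1) →
      (∀ t : ℝ, 0 ≤ t → h t = Real.exp (-(a * t))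
          + a * ∫ s in (0:ℝ)..t, Real.exp (a * (s - t)) *
              ∑' k : ℕ, (q k : ℝ) * (h s) ^ (k + 1)) →
      ∀ t : ℝ, 0 ≤ t → h t = 1) := by
  constructor
  · exact key_lip hq1 hm₁
  · intro h hc hrange heq t ht
    rcases eq_or_lt_of_le ha with haz | hap
    · have h0 := heq t ht
      rw [← haz] at h0
      simpa using h0
    · set G : ℝ → ℝ := fun z => ∑' k : ℕ, (q k : ℝ) * z ^ (k + 1) with hGdef
      have hm0 : 0 ≤ m₁ :=
        hasSum_le (fun k => mul_nonneg k.cast_nonneg (q k).coe_nonneg) hasSum_zero hm₁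
      have hm1 : 0 ≤ m₁ + 1 := by linarith
      have hG1 : G 1 = 1 := by
        simp only [hGdef, one_pow, mul_one]
        exact (qhasSum hq1).tsum_eq
      have hGc : ContinuousOn G (Set.Icc 0 1) := by
        have hL : LipschitzOnWith (m₁ + 1).toNNReal G (Set.Icc 0 1) := by
          apply LipschitzOnWith.of_dist_le_mul
          intro x hx y hy
          rw [Real.dist_eq, Real.dist_eq, Real.coe_toNNReal _ hm1]
          exact key_lip hq1 hm₁ x y hx hy
        exact hL.continuousOn
      have hGlip : ∀ z ∈ Set.Icc (0:ℝ) 1, |G z - 1| ≤ (m₁ + 1) * |z - 1| := by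
        intro z hz
        have h2 := key_lip hq1 hm₁ z 1 hz (Set.mem_Icc.2 ⟨zero_le_one, le_refl 1⟩)
        calc |G z - 1| = |G z - G 1| := by rw [hG1]
          _ ≤ (m₁ + 1) * |z - 1| := by simpa [hGdef] using h2
      exact unique_sol a (m₁ + 1) hap hm1 G hGc hG1 hGlip h hc hrange
        (fun t ht => heq t ht) t ht
end
end

section
/- Let (μ_n) be the generalized DR model μ_{n+1} = [(1−α)μ_n + α μ_n * μ_n^q] ∘ T₁^{−1} with 0 ≤ α ≤ 1 and offspring distribution q with first and second moments m₁, m₂. Then for every n ≥ 0, ∫ z² dμ_{n+1}(z) ≤ (1 + 2α m₁ + α m₂) ∫ z² dμ_n(z). -/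
open MeasureTheory ProbabilityTheory Filter
open scoped ENNReal NNReal

noncomputable section

/-!
Writing `M` and `S` for the first and second moments (as `ℝ≥0∞`-valued lower integrals, so that
no integrability bookkeeping is needed until the very end), `S (μ * ν) = S μ + 2 M μ M ν + S ν`
for probability measures, and `M² ≤ S` turns this into `S (μ^{*k}) ≤ k² S μ`. Hence
`S (μ * μ^q) ≤ ∑ q_k (k + 1)² S μ ≤ (m₂ + 2 m₁ + 1) S μ`, and since `T₁` only decreases `z²`,
`S μ_{n+1} ≤ ((1 - α) + α (m₂ + 2 m₁ + 1)) S μ_n`.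
-/

def firstMoment (μ : Measure ℝ≥0) : ℝ≥0∞ := ∫⁻ z, (z : ℝ≥0∞) ∂μ

def secondMoment (μ : Measure ℝ≥0) : ℝ≥0∞ := ∫⁻ z, (z : ℝ≥0∞) ^ 2 ∂μ

theorem conv_eq_measureConv (μ ν : Measure ℝ≥0) : conv μ ν = μ ∗ ν := rfl

instance (μ ν : Measure ℝ≥0) [IsProbabilityMeasure μ] [IsProbabilityMeasure ν] :
    IsProbabilityMeasure (conv μ ν) := by
  rw [conv_eq_measureConv]; infer_instance

instance (μ : Measure ℝ≥0) [IsProbabilityMeasure μ] (k : ℕ) :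
    IsProbabilityMeasure (convPow μ k) := by
  induction k with
  | zero => rw [convPow]; infer_instance
  | succ k ih => rw [convPow]; infer_instance

theorem conv_convPow (μ : Measure ℝ≥0) [IsProbabilityMeasure μ] (k : ℕ) :
    conv μ (convPow μ k) = convPow μ (k + 1) := by
  rw [convPow, conv_eq_measureConv, conv_eq_measureConv, Measure.conv_comm]

theorem conv_qMix (q : ℕ → ℝ≥0) (μ : Measure ℝ≥0) [IsProbabilityMeasure μ] :
    conv μ (qMix q μ) = Measure.sum fun k => (q (k + 1) : ℝ≥0∞) • convPow μ (k + 2) := by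
  simp_rw [qMix, conv, Measure.prod_sum_right, Measure.map_sum measurable_add.aemeasurable,
    Measure.prod_smul_right, Measure.map_smul]
  congr! 2 with k
  exact congrArg _ (conv_convPow μ (k + 1))

theorem firstMoment_sq_le_secondMoment (μ : Measure ℝ≥0) [IsProbabilityMeasure μ] :
    firstMoment μ ^ 2 ≤ secondMoment μ := by
  have h := ENNReal.lintegral_mul_le_Lp_mul_Lq μ Real.HolderConjugate.two_two
    (f := fun z : ℝ≥0 => (z : ℝ≥0∞)) (g := fun _ => 1)
    measurable_coe_nnreal_ennreal.aemeasurable aemeasurable_const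
  simp only [Pi.mul_apply, mul_one, ENNReal.rpow_two, one_pow, ENNReal.one_rpow, lintegral_const,
    measure_univ] at h
  calc firstMoment μ ^ 2 ≤ (secondMoment μ ^ (1 / 2 : ℝ)) ^ 2 := pow_le_pow_left' h 2
    _ = secondMoment μ := by
      rw [← ENNReal.rpow_natCast, ← ENNReal.rpow_mul]; norm_num

section Convolution

variable (μ ν : Measure ℝ≥0) [IsProbabilityMeasure μ] [IsProbabilityMeasure ν]

theorem firstMoment_conv : firstMoment (conv μ ν) = firstMoment μ + firstMoment ν := by
  have inner (x : ℝ≥0) : ∫⁻ y, ((x + y : ℝ≥0) : ℝ≥0∞) ∂ν = x + firstMoment ν := by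
    simp only [ENNReal.coe_add]
    rw [lintegral_add_left measurable_const, lintegral_const, measure_univ, mul_one, firstMoment]
  rw [firstMoment, conv_eq_measureConv, Measure.lintegral_conv measurable_coe_nnreal_ennreal]
  simp only [inner]
  rw [lintegral_add_right _ measurable_const, lintegral_const, measure_univ, mul_one]
  rfl

theorem secondMoment_conv : secondMoment (conv μ ν) =
    secondMoment μ + 2 * firstMoment μ * firstMoment ν + secondMoment ν := by
  have inner (x : ℝ≥0) : ∫⁻ y, ((x + y : ℝ≥0) : ℝ≥0∞) ^ 2 ∂ν =
      (x : ℝ≥0∞) ^ 2 + 2 * firstMoment ν * x + secondMoment ν := by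
    have expand (y : ℝ≥0) : ((x + y : ℝ≥0) : ℝ≥0∞) ^ 2 = (x ^ 2 + 2 * x * y : ℝ≥0∞) + y ^ 2 := by
      push_cast; ring
    simp only [expand]
    rw [lintegral_add_right _ (by fun_prop), lintegral_add_left measurable_const,
      lintegral_const_mul _ measurable_coe_nnreal_ennreal, lintegral_const, measure_univ,
      firstMoment, secondMoment]
    ring
  rw [secondMoment, conv_eq_measureConv, Measure.lintegral_conv (by fun_prop)]
  simp only [inner]
  rw [lintegral_add_right _ measurable_const, lintegral_add_left (by fun_prop),
    lintegral_const_mul _ measurable_coe_nnreal_ennreal, lintegral_const, measure_univ]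
  simp only [firstMoment, secondMoment]
  ring

end Convolution

def qMixGrowth (q : ℕ → ℝ≥0) : ℝ≥0∞ := ∑' k, (q (k + 1) : ℝ≥0∞) * ((k + 2 : ℕ) : ℝ≥0∞) ^ 2

section ConvolutionPower

variable (μ : Measure ℝ≥0) [IsProbabilityMeasure μ]

theorem firstMoment_convPow (k : ℕ) : firstMoment (convPow μ k) = k * firstMoment μ := by
  induction k with
  | zero => simp [convPow, firstMoment]
  | succ k ih => rw [convPow, firstMoment_conv, ih]; push_cast; ring

theorem secondMoment_convPow_le (k : ℕ) :
    secondMoment (convPow μ k) ≤ k ^ 2 * secondMoment μ := by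
  induction k with
  | zero => simp [convPow, secondMoment]
  | succ k ih =>
    have cross : 2 * (k * firstMoment μ) * firstMoment μ ≤ 2 * k * secondMoment μ := by
      calc 2 * (k * firstMoment μ) * firstMoment μ = 2 * k * firstMoment μ ^ 2 := by ring
        _ ≤ 2 * k * secondMoment μ := by gcongr; exact firstMoment_sq_le_secondMoment μ
    calc secondMoment (convPow μ (k + 1))
        = secondMoment (convPow μ k) + 2 * (k * firstMoment μ) * firstMoment μ +
            secondMoment μ := by
          rw [convPow, secondMoment_conv, firstMoment_convPow]
      _ ≤ k ^ 2 * secondMoment μ + 2 * k * secondMoment μ + secondMoment μ := by gcongr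
      _ = (k + 1 : ℕ) ^ 2 * secondMoment μ := by push_cast; ring

theorem secondMoment_conv_qMix_le (q : ℕ → ℝ≥0) :
    secondMoment (conv μ (qMix q μ)) ≤ qMixGrowth q * secondMoment μ := by
  rw [conv_qMix, secondMoment, lintegral_sum_measure, qMixGrowth, ← ENNReal.tsum_mul_right]
  refine ENNReal.tsum_le_tsum fun k => ?_
  rw [lintegral_smul_measure, smul_eq_mul, mul_assoc]
  gcongr
  exact secondMoment_convPow_le μ (k + 2)

end ConvolutionPower

theorem secondMoment_map_le {f : ℝ≥0 → ℝ≥0} (hf : Measurable f) (hle : ∀ x, f x ≤ x)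
    (μ : Measure ℝ≥0) : secondMoment (μ.map f) ≤ secondMoment μ := by
  rw [secondMoment, lintegral_map (by fun_prop) hf]
  exact lintegral_mono fun x => by gcongr; exact hle x

def drStep (α : ℝ≥0) (q : ℕ → ℝ≥0) (μ : Measure ℝ≥0) : Measure ℝ≥0 :=
  (((1 - α : ℝ≥0) : ℝ≥0∞) • μ + (α : ℝ≥0∞) • conv μ (qMix q μ)).map (fun x => x - 1)

theorem secondMoment_drStep_le (α : ℝ≥0) (q : ℕ → ℝ≥0) (μ : Measure ℝ≥0)
    [IsProbabilityMeasure μ] :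
    secondMoment (drStep α q μ) ≤
      (((1 - α : ℝ≥0) : ℝ≥0∞) + α * qMixGrowth q) * secondMoment μ := by
  calc secondMoment (drStep α q μ)
      ≤ secondMoment (((1 - α : ℝ≥0) : ℝ≥0∞) • μ + (α : ℝ≥0∞) • conv μ (qMix q μ)) :=
        secondMoment_map_le (by fun_prop) (fun _ => tsub_le_self) _
    _ = (1 - α : ℝ≥0) * secondMoment μ + α * secondMoment (conv μ (qMix q μ)) := by
        simp only [secondMoment, lintegral_add_measure, lintegral_smul_measure, smul_eq_mul]
    _ ≤ (1 - α : ℝ≥0) * secondMoment μ + α * (qMixGrowth q * secondMoment μ) := by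
        gcongr; exact secondMoment_conv_qMix_le μ q
    _ = _ := by ring

theorem qMixGrowth_le {q : ℕ → ℝ≥0} (hq1 : ∑' k, q k = 1) {m₁ m₂ : ℝ}
    (hm₁ : HasSum (fun k : ℕ => (k : ℝ) * (q k : ℝ)) m₁)
    (hm₂ : HasSum (fun k : ℕ => (k : ℝ) ^ 2 * (q k : ℝ)) m₂) :
    qMixGrowth q ≤ ENNReal.ofReal (m₂ + 2 * m₁ + 1) := by
  have hq : HasSum (fun k => (q k : ℝ)) 1 := by
    have hs : Summable q := by
      by_contra h
      simp [tsum_eq_zero_of_not_summable h] at hq1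
    exact NNReal.hasSum_coe.2 (hq1 ▸ hs.hasSum)
  have hsum : HasSum (fun k : ℕ => ((q k * ((k + 1 : ℕ) : ℝ≥0) ^ 2 : ℝ≥0) : ℝ))
      (m₂ + 2 * m₁ + 1) := by
    convert (hm₂.add (hm₁.mul_left 2)).add hq using 1
    funext k; push_cast; ring
  rw [qMixGrowth, ← hsum.tsum_eq,
    ENNReal.ofReal_tsum_of_nonneg (fun _ => NNReal.coe_nonneg _) hsum.summable]
  simp only [ENNReal.ofReal_coe_nnreal, ENNReal.coe_mul, ENNReal.coe_pow, ENNReal.coe_natCast]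
  rw [tsum_eq_zero_add' (f := fun k : ℕ => (q k : ℝ≥0∞) * ((k + 1 : ℕ) : ℝ≥0∞) ^ 2)
    ENNReal.summable]
  exact le_add_self

theorem coe_one_sub_add_mul_ofReal {α : ℝ≥0} (hα : α ≤ 1) {c : ℝ} (hc : 0 ≤ c) :
    ((1 - α : ℝ≥0) : ℝ≥0∞) + α * ENNReal.ofReal c = ENNReal.ofReal (1 - α + α * c) := by
  rw [ENNReal.ofReal_add (by simpa using hα) (by positivity), ENNReal.ofReal_mul α.coe_nonneg,
    ← NNReal.coe_one, ← NNReal.coe_sub hα, ENNReal.ofReal_coe_nnreal, ENNReal.ofReal_coe_nnreal]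

theorem secondMoment_eq_lintegral_ofReal (μ : Measure ℝ≥0) :
    secondMoment μ = ∫⁻ z, ENNReal.ofReal ((z : ℝ) ^ 2) ∂μ := by
  simp [secondMoment, ENNReal.ofReal_pow]

theorem integral_sq_eq_toReal_secondMoment (μ : Measure ℝ≥0) :
    ∫ z, (z : ℝ) ^ 2 ∂μ = (secondMoment μ).toReal := by
  rw [secondMoment_eq_lintegral_ofReal, integral_eq_lintegral_of_nonneg_ae
    (ae_of_all _ fun _ => sq_nonneg _) (by fun_prop)]

theorem secondMoment_ne_top {μ : Measure ℝ≥0} (h : Integrable (fun z : ℝ≥0 => (z : ℝ) ^ 2) μ) :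
    secondMoment μ ≠ ⊤ := by
  rw [secondMoment_eq_lintegral_ofReal]
  exact h.lintegral_lt_top.ne

theorem secondMoment_DR_step_general (α : ℝ≥0) (hα : α ≤ 1)
    (q : ℕ → ℝ≥0) (hq1 : ∑' k, q k = 1)
    (m₁ m₂ : ℝ) (hm₁ : HasSum (fun k : ℕ => (k : ℝ) * (q k : ℝ)) m₁)
    (hm₂ : HasSum (fun k : ℕ => ((k : ℝ)) ^ 2 * (q k : ℝ)) m₂)
    (μ : ℕ → Measure ℝ≥0) (hp : ∀ n, IsProbabilityMeasure (μ n))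
    (hint : ∀ n, Integrable (fun z : ℝ≥0 => ((z : ℝ)) ^ 2) (μ n))
    (hrec : ∀ n, μ (n + 1) =
      (((1 - α : ℝ≥0) : ℝ≥0∞) • μ n
        + ((α : ℝ≥0∞)) • conv (μ n) (qMix q (μ n))).map (fun x => x - (1 : ℝ≥0))) :
    ∀ n, ∫ z, ((z : ℝ)) ^ 2 ∂(μ (n + 1))
      ≤ (1 + 2 * (α : ℝ) * m₁ + (α : ℝ) * m₂) * ∫ z, ((z : ℝ)) ^ 2 ∂(μ n) := by
  intro n
  have hm₁0 : 0 ≤ m₁ := hm₁.nonneg fun _ => by positivity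
  have hm₂0 : 0 ≤ m₂ := hm₂.nonneg fun _ => by positivity
  have hC : 0 ≤ 1 + 2 * (α : ℝ) * m₁ + α * m₂ := by positivity
  have key : secondMoment (μ (n + 1)) ≤
      ENNReal.ofReal (1 + 2 * α * m₁ + α * m₂) * secondMoment (μ n) :=
    calc secondMoment (μ (n + 1))
        ≤ (((1 - α : ℝ≥0) : ℝ≥0∞) + α * qMixGrowth q) * secondMoment (μ n) :=
          hrec n ▸ secondMoment_drStep_le α q (μ n)
      _ ≤ (((1 - α : ℝ≥0) : ℝ≥0∞) + α * ENNReal.ofReal (m₂ + 2 * m₁ + 1)) *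
            secondMoment (μ n) := by
        gcongr; exact qMixGrowth_le hq1 hm₁ hm₂
      _ = ENNReal.ofReal (1 + 2 * α * m₁ + α * m₂) * secondMoment (μ n) := by
        rw [coe_one_sub_add_mul_ofReal hα (by positivity)]
        congr 2
        ring
  rw [integral_sq_eq_toReal_secondMoment, integral_sq_eq_toReal_secondMoment,
    ← ENNReal.toReal_ofReal hC, ← ENNReal.toReal_mul]
  exact ENNReal.toReal_mono
    (ENNReal.mul_ne_top ENNReal.ofReal_ne_top (secondMoment_ne_top (hint n))) key

/-- Second-moment growth of the generalized DR model:
`∫ z² dμ_{n+1} ≤ (1 + 2α m₁ + α m₂) ∫ z² dμ_n`. -/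
theorem secondMoment_DR_step (α : ℝ≥0) (hα : α ≤ 1)
    (q : ℕ → ℝ≥0) (hq0 : q 0 = 0) (hq1 : ∑' k, q k = 1)
    (m₁ m₂ : ℝ) (hm₁ : HasSum (fun k : ℕ => (k : ℝ) * (q k : ℝ)) m₁)
    (hm₂ : HasSum (fun k : ℕ => ((k : ℝ)) ^ 2 * (q k : ℝ)) m₂)
    (μ : ℕ → Measure ℝ≥0) (hp : ∀ n, IsProbabilityMeasure (μ n))
    (hint : ∀ n, Integrable (fun z : ℝ≥0 => ((z : ℝ)) ^ 2) (μ n))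
    (hrec : ∀ n, μ (n + 1) =
      (((1 - α : ℝ≥0) : ℝ≥0∞) • μ n
        + ((α : ℝ≥0∞)) • conv (μ n) (qMix q (μ n))).map (fun x => x - (1 : ℝ≥0))) :
    ∀ n, ∫ z, ((z : ℝ)) ^ 2 ∂(μ (n + 1))
      ≤ (1 + 2 * (α : ℝ) * m₁ + (α : ℝ) * m₂) * ∫ z, ((z : ℝ)) ^ 2 ∂(μ n) :=
  secondMoment_DR_step_general α hα q hq1 m₁ m₂ hm₁ hm₂ μ hp hint hrec
end
end

section
/- Let a ≥ 0 and q have first moment m₁ < ∞. Let (Y_n^{(k)}) be the rescaled generalized DR process with Y_{n+1}^{(k)} = (Y_n^{(k)} + k^{−1}η_n (G_n^{(k)})^{−1}(U_n) − k^{−1})₊ where η_n is Bernoulli(a/k). If sup_k E[(Y₀^{(k)})²] < ∞, then for every t ≥ 0, E[Y_{⌊kt⌋}^{(k)}] ≤ e^{a m₁ t} E[Y₀^{(k)}]. -/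
open MeasureTheory ProbabilityTheory Filter
open scoped ENNReal NNReal

noncomputable section

/-!
A `q`-mixture of convolution powers has mean `m₁` times the mean of the base law, so
`E[Z_n] = m₁ E[Y_n]`. Dropping the positive part and the `- k⁻¹` only increases `Y_{n+1}`, and
`η_n ⊥ Z_n` with `E[η_n] = a / k`, hence
`E[Y_{n+1}] ≤ (1 + a m₁ / k²) E[Y_n] ≤ (1 + a m₁ / k) E[Y_n]`.
Iterating and `(1 + a m₁ / k)^⌊kt⌋ ≤ e^{a m₁ t}` conclude. Working with lower Lebesgue integrals
avoids proving integrability of `Y_n` for `n > 0`.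
-/

section Moments

variable (μ ν : Measure ℝ≥0) [IsProbabilityMeasure μ] [IsProbabilityMeasure ν]

instance isProbabilityMeasure_conv : IsProbabilityMeasure (conv μ ν) :=
  Measure.isProbabilityMeasure_map measurable_add.aemeasurable

instance isProbabilityMeasure_convPow (n : ℕ) : IsProbabilityMeasure (convPow μ n) := by
  induction n with
  | zero => exact Measure.dirac.isProbabilityMeasure
  | succ n _ => exact isProbabilityMeasure_conv _ _

theorem lintegral_coe_conv :
    ∫⁻ x, (x : ℝ≥0∞) ∂(conv μ ν) = ∫⁻ x, (x : ℝ≥0∞) ∂μ + ∫⁻ x, (x : ℝ≥0∞) ∂ν := by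
  have h₁ : Measurable fun p : ℝ≥0 × ℝ≥0 => (p.1 : ℝ≥0∞) := measurable_fst.coe_nnreal_ennreal
  have h₂ : Measurable fun p : ℝ≥0 × ℝ≥0 => (p.2 : ℝ≥0∞) := measurable_snd.coe_nnreal_ennreal
  rw [conv, lintegral_map measurable_coe_nnreal_ennreal measurable_add]
  simp only [ENNReal.coe_add]
  rw [lintegral_add_left h₁, lintegral_prod _ h₁.aemeasurable, lintegral_prod _ h₂.aemeasurable]
  simp

theorem lintegral_coe_convPow (n : ℕ) :
    ∫⁻ x, (x : ℝ≥0∞) ∂(convPow μ n) = n * ∫⁻ x, (x : ℝ≥0∞) ∂μ := by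
  induction n with
  | zero => simp [convPow]
  | succ n ih =>
    rw [convPow, lintegral_coe_conv, ih]
    push_cast
    ring

theorem lintegral_coe_qMix (q : ℕ → ℝ≥0) :
    ∫⁻ x, (x : ℝ≥0∞) ∂(qMix q μ) = (∑' j : ℕ, (j : ℝ≥0∞) * q j) * ∫⁻ x, (x : ℝ≥0∞) ∂μ := by
  simp only [qMix, lintegral_sum_measure, lintegral_smul_measure, lintegral_coe_convPow]
  rw [tsum_eq_zero_add' (f := fun j : ℕ => (j : ℝ≥0∞) * q j) ENNReal.summable,
    Nat.cast_zero, zero_mul, zero_add, ← ENNReal.tsum_mul_right]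
  exact tsum_congr fun j => by ring

end Moments

theorem le_pow_mul_of_le_mul {α : Type*} [Semiring α] [PartialOrder α] [IsOrderedRing α]
    {u : ℕ → α} {c : α} (hc : 0 ≤ c) (h : ∀ n, u (n + 1) ≤ c * u n) (n : ℕ) :
    u n ≤ c ^ n * u 0 := by
  induction n with
  | zero => simp
  | succ n ih =>
    calc u (n + 1) ≤ c * u n := h n
      _ ≤ c * (c ^ n * u 0) := mul_le_mul_of_nonneg_left ih hc
      _ = c ^ (n + 1) * u 0 := by rw [pow_succ', mul_assoc]

theorem one_add_div_pow_floor_le_exp {x k t : ℝ} (hx : 0 ≤ x) (hk : 0 < k) (ht : 0 ≤ t) :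
    (1 + x / k) ^ ⌊k * t⌋₊ ≤ Real.exp (x * t) :=
  calc (1 + x / k) ^ ⌊k * t⌋₊ ≤ Real.exp (x / k) ^ ⌊k * t⌋₊ := by
        gcongr
        linarith [Real.add_one_le_exp (x / k)]
    _ = Real.exp (⌊k * t⌋₊ * (x / k)) := (Real.exp_nat_mul _ _).symm
    _ ≤ Real.exp (k * t * (x / k)) := by
        gcongr
        exact Nat.floor_le (by positivity)
    _ = Real.exp (x * t) := by field_simp

theorem one_add_inv_mul_ofReal_div_mul_ofReal_le {k : ℕ} (hk : 1 ≤ k) {a m : ℝ} (ha : 0 ≤ a)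
    (hm : 0 ≤ m) :
    1 + (((k : ℝ≥0)⁻¹ : ℝ≥0) : ℝ≥0∞) * ENNReal.ofReal (a / k) * ENNReal.ofReal m
      ≤ ENNReal.ofReal (1 + a * m / k) := by
  have hk₀ : (0 : ℝ) < k := by exact_mod_cast hk
  rw [ENNReal.coe_inv (by positivity), ENNReal.coe_natCast, ← ENNReal.ofReal_natCast,
    ← ENNReal.ofReal_inv_of_pos hk₀, ← ENNReal.ofReal_mul (by positivity),
    ← ENNReal.ofReal_mul (by positivity), ← ENNReal.ofReal_one,
    ← ENNReal.ofReal_add zero_le_one (by positivity)]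
  refine ENNReal.ofReal_le_ofReal (add_le_add_right ?_ 1)
  calc (k : ℝ)⁻¹ * (a / k) * m = a * m / k * (k : ℝ)⁻¹ := by ring
    _ ≤ a * m / k := mul_le_of_le_one_right (by positivity)
        (inv_le_one_of_one_le₀ (by exact_mod_cast hk))

section Step

variable {Ω : Type*} {mΩ : MeasurableSpace Ω} (P : Measure Ω)

theorem lintegral_coe_eq_measure_eq_one {η : Ω → ℝ≥0} (hη : Measurable η)
    (h01 : ∀ ω, η ω = 0 ∨ η ω = 1) : ∫⁻ ω, η ω ∂P = P {ω | η ω = 1} := by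
  have : (fun ω => (η ω : ℝ≥0∞)) = (η ⁻¹' {1}).indicator 1 := by
    ext ω
    rcases h01 ω with h | h <;> simp [Set.indicator, h]
  rw [this]
  exact lintegral_indicator_one (hη (measurableSet_singleton 1))

theorem integral_coe_eq_toReal_lintegral {f : Ω → ℝ≥0} (hf : Measurable f) :
    ∫ ω, (f ω : ℝ) ∂P = (∫⁻ ω, f ω ∂P).toReal := by
  simpa using integral_toReal hf.coe_nnreal_ennreal.aemeasurable
    (ae_of_all P fun _ => ENNReal.coe_lt_top)

theorem lintegral_coe_step_le [IsProbabilityMeasure P] (q : ℕ → ℝ≥0) {Y Y' η Z : Ω → ℝ≥0}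
    {c : ℝ≥0} (hY : Measurable Y) (hη : Measurable η) (hZ : Measurable Z)
    (hY' : ∀ ω, Y' ω = Y ω + c * η ω * Z ω - c) (hZlaw : P.map Z = qMix q (P.map Y))
    (hη01 : ∀ ω, η ω = 0 ∨ η ω = 1) (hηZ : IndepFun η Z P) :
    ∫⁻ ω, Y' ω ∂P ≤ (1 + c * P {ω | η ω = 1} * ∑' j : ℕ, (j : ℝ≥0∞) * q j) * ∫⁻ ω, Y ω ∂P := by
  have hmean_Z : ∫⁻ ω, Z ω ∂P = (∑' j : ℕ, (j : ℝ≥0∞) * q j) * ∫⁻ ω, Y ω ∂P := by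
    have := Measure.isProbabilityMeasure_map (μ := P) hY.aemeasurable
    rw [← lintegral_map measurable_coe_nnreal_ennreal hZ, hZlaw, lintegral_coe_qMix,
      lintegral_map measurable_coe_nnreal_ennreal hY]
  have hmean_ηZ : ∫⁻ ω, η ω * Z ω ∂P = (∫⁻ ω, η ω ∂P) * ∫⁻ ω, Z ω ∂P :=
    lintegral_mul_eq_lintegral_mul_lintegral_of_indepFun hη.coe_nnreal_ennreal
      hZ.coe_nnreal_ennreal (hηZ.comp measurable_coe_nnreal_ennreal measurable_coe_nnreal_ennreal)
  calc ∫⁻ ω, Y' ω ∂P ≤ ∫⁻ ω, Y ω + c * (η ω * Z ω) ∂P := by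
        refine lintegral_mono fun ω => ?_
        rw [hY', ← mul_assoc, ← ENNReal.coe_mul, ← ENNReal.coe_mul, ← ENNReal.coe_add]
        exact ENNReal.coe_le_coe.2 tsub_le_self
    _ = ∫⁻ ω, Y ω ∂P + c * ∫⁻ ω, η ω * Z ω ∂P := by
        rw [lintegral_add_left hY.coe_nnreal_ennreal,
          lintegral_const_mul' _ _ ENNReal.coe_ne_top]
    _ = (1 + c * P {ω | η ω = 1} * ∑' j : ℕ, (j : ℝ≥0∞) * q j) * ∫⁻ ω, Y ω ∂P := by
        rw [hmean_ηZ, hmean_Z, lintegral_coe_eq_measure_eq_one P hη hη01]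
        ring

theorem lintegral_coe_ne_top_of_integrable_sq [IsFiniteMeasure P] {f : Ω → ℝ≥0}
    (hf : Measurable f) (hf2 : Integrable (fun ω => (f ω : ℝ) ^ 2) P) : ∫⁻ ω, f ω ∂P ≠ ⊤ := by
  have hf1 : Integrable (fun ω => (f ω : ℝ)) P :=
    ((memLp_two_iff_integrable_sq hf.coe_nnreal_real.aestronglyMeasurable).2 hf2).integrable
      one_le_two
  rw [lintegral_coe_eq_integral _ hf1]
  exact ENNReal.ofReal_ne_top

end Step

theorem rescaled_firstMoment_bound_general
    {Ω : Type*} {mΩ : MeasurableSpace Ω} (P : Measure Ω) [IsProbabilityMeasure P]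
    (a m₁ : ℝ) (ha : 0 ≤ a)
    (q : ℕ → ℝ≥0)
    (hm₁ : HasSum (fun j : ℕ => (j : ℝ) * (q j : ℝ)) m₁)
    (Y η Z : ℕ → ℕ → Ω → ℝ≥0)
    (hYmeas : ∀ k n, Measurable (Y k n)) (hηmeas : ∀ k n, Measurable (η k n))
    (hZmeas : ∀ k n, Measurable (Z k n))
    (hrec : ∀ k n ω, Y k (n + 1) ω
      = Y k n ω + ((k : ℝ≥0))⁻¹ * η k n ω * Z k n ω - ((k : ℝ≥0))⁻¹)
    (hZlaw : ∀ k n, P.map (Z k n) = qMix q (P.map (Y k n)))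
    (hη01 : ∀ k n ω, η k n ω = 0 ∨ η k n ω = 1)
    (hηlaw : ∀ k n, 1 ≤ k → P {ω | η k n ω = 1} = ENNReal.ofReal (a / k))
    (hηZ : ∀ k n, IndepFun (η k n) (Z k n) P)
    (hint : ∀ k, Integrable (fun ω => ((Y k 0 ω : ℝ)) ^ 2) P) :
    ∀ k : ℕ, 1 ≤ k → a ≤ (k : ℝ) → ∀ t : ℝ, 0 ≤ t →
      ∫ ω, (Y k (Nat.floor ((k : ℝ) * t)) ω : ℝ) ∂P
        ≤ Real.exp (a * m₁ * t) * ∫ ω, (Y k 0 ω : ℝ) ∂P := by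
  intro k hk _ t ht
  have hm₁₀ : 0 ≤ m₁ := hm₁.nonneg fun j => by positivity
  have hmean : ∑' j : ℕ, (j : ℝ≥0∞) * q j = ENNReal.ofReal m₁ := by
    rw [← hm₁.tsum_eq, ENNReal.ofReal_tsum_of_nonneg (fun j => by positivity) hm₁.summable]
    simp [ENNReal.ofReal_mul]
  have hstep (n : ℕ) :
      ∫⁻ ω, Y k (n + 1) ω ∂P ≤ ENNReal.ofReal (1 + a * m₁ / k) * ∫⁻ ω, Y k n ω ∂P := by
    have := lintegral_coe_step_le P q (hYmeas k n) (hηmeas k n) (hZmeas k n) (hrec k n)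
      (hZlaw k n) (hη01 k n) (hηZ k n)
    rw [hηlaw k n hk, hmean] at this
    exact this.trans (mul_le_mul_left (one_add_inv_mul_ofReal_div_mul_ofReal_le hk ha hm₁₀) _)
  have hL₀ := lintegral_coe_ne_top_of_integrable_sq P (hYmeas k 0) (hint k)
  rw [integral_coe_eq_toReal_lintegral P (hYmeas k _),
    integral_coe_eq_toReal_lintegral P (hYmeas k 0)]
  calc _ ≤ (ENNReal.ofReal (1 + a * m₁ / k) ^ ⌊k * t⌋₊ * ∫⁻ ω, Y k 0 ω ∂P).toReal :=
        ENNReal.toReal_mono (ENNReal.mul_ne_top (by simp) hL₀)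
          (le_pow_mul_of_le_mul (u := fun n => ∫⁻ ω, Y k n ω ∂P) zero_le hstep _)
    _ = (1 + a * m₁ / k) ^ ⌊k * t⌋₊ * (∫⁻ ω, Y k 0 ω ∂P).toReal := by
        rw [ENNReal.toReal_mul, ENNReal.toReal_pow, ENNReal.toReal_ofReal (by positivity)]
    _ ≤ _ := by
        gcongr
        exact one_add_div_pow_floor_le_exp (by positivity) (by exact_mod_cast hk) ht

/-- First-moment bound for the rescaled generalized DR processes:
`E[Y^{(k)}_{⌊kt⌋}] ≤ e^{a m₁ t} E[Y^{(k)}_0]`. -/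
theorem rescaled_firstMoment_bound
    {Ω : Type*} {mΩ : MeasurableSpace Ω} (P : Measure Ω) [IsProbabilityMeasure P]
    (a m₁ : ℝ) (ha : 0 ≤ a)
    (q : ℕ → ℝ≥0) (hq0 : q 0 = 0) (hq1 : ∑' j, q j = 1)
    (hm₁ : HasSum (fun j : ℕ => (j : ℝ) * (q j : ℝ)) m₁)
    (Y η Z : ℕ → ℕ → Ω → ℝ≥0)
    (hYmeas : ∀ k n, Measurable (Y k n)) (hηmeas : ∀ k n, Measurable (η k n))
    (hZmeas : ∀ k n, Measurable (Z k n))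
    (hrec : ∀ k n ω, Y k (n + 1) ω
      = Y k n ω + ((k : ℝ≥0))⁻¹ * η k n ω * Z k n ω - ((k : ℝ≥0))⁻¹)
    (hZlaw : ∀ k n, P.map (Z k n) = qMix q (P.map (Y k n)))
    (hη01 : ∀ k n ω, η k n ω = 0 ∨ η k n ω = 1)
    (hηlaw : ∀ k n, 1 ≤ k → P {ω | η k n ω = 1} = ENNReal.ofReal (a / k))
    (hindep : ∀ k n, IndepFun (fun ω => (η k n ω, Z k n ω)) (Y k n) P)
    (hηZ : ∀ k n, IndepFun (η k n) (Z k n) P)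
    (hmom : ∃ C : ℝ, ∀ k, ∫ ω, ((Y k 0 ω : ℝ)) ^ 2 ∂P ≤ C)
    (hint : ∀ k, Integrable (fun ω => ((Y k 0 ω : ℝ)) ^ 2) P) :
    ∀ k : ℕ, 1 ≤ k → a ≤ (k : ℝ) → ∀ t : ℝ, 0 ≤ t →
      ∫ ω, (Y k (Nat.floor ((k : ℝ) * t)) ω : ℝ) ∂P
        ≤ Real.exp (a * m₁ * t) * ∫ ω, (Y k 0 ω : ℝ) ∂P :=
  rescaled_firstMoment_bound_general (mΩ := mΩ) P a m₁ ha q hm₁ Y η Z hYmeas hηmeas hZmeas hrec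
    hZlaw hη01 hηlaw hηZ hint
end
end
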